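/- arXiv:1102.0417 — 9 statements merged into one kernel-verified Lean document; each statement's English description precedes it below -/
import Mathlib

section
/- If K is a d-representable simplicial complex, then K contains no induced simplicial hole of dimension k for any k ≥ d; that is, there is no set S of k+2 vertices of K with k ≥ d such that every proper subset of S is a face of K but S itself is not a face of K. Equivalently, the Helly number of a d-representable complex is at most d+1. -/
/-- A `d`-representable simplicial complex contains no induced simplicial hole of
dimension `k ≥ d`: there is no set `S` of `k + 2` vertices all of whose proper
(nonempty) subsets are faces while `S` itself is not a face.  Stated in the
equivalent contrapositive form: if all proper nonempty subsets of a `(k+2)`-element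
set `S` are faces of the `d`-representable complex `K`, then `S` is a face of `K`. -/
theorem dRepresentable_no_induced_simplicial_hole {V : Type*} (d k : ℕ) (hdk : d ≤ k)
    (K : Set (Finset V))
    (hK : ∀ σ ∈ K, σ.Nonempty ∧ ∀ τ ⊆ σ, τ.Nonempty → τ ∈ K)
    -- `K` is `d`-representable: it is the nerve of the family of convex sets `C v`, `v ∈ V`
    (C : V → Set (Fin d → ℝ)) (hC : ∀ v, Convex ℝ (C v))
    (hrep : ∀ σ : Finset V, σ.Nonempty → (σ ∈ K ↔ (⋂ v ∈ σ, C v).Nonempty))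
    (S : Finset V) (hcard : S.card = k + 2)
    (hfaces : ∀ T ⊂ S, T.Nonempty → T ∈ K) :
    S ∈ K := by
  classical
  have hSne : S.Nonempty := Finset.card_pos.mp (by omega)
  rw [hrep S hSne]
  apply Convex.helly_theorem' (𝕜 := ℝ) (fun v _ => hC v)
  intro I hI hIcard
  rw [Module.finrank_pi ℝ] at hIcard
  simp only [Finset.sum_const, smul_eq_mul, mul_one, Module.finrank_self,
    Finset.card_univ, Fintype.card_fin] at hIcard
  rcases I.eq_empty_or_nonempty with rfl | hIne
  · simp
  · have hIS : I ⊂ S := by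
      refine lt_of_le_of_ne hI ?_
      rintro rfl
      omega
    exact (hrep I hIne).mp (hfaces I hIS hIne)
end

section
/- (Colorful Helly theorem, Lovász.) Let F_1, …, F_{d+1} be finite nonempty families of convex sets in ℝ^d. Suppose that for every choice of sets F_1 ∈ F_1, …, F_{d+1} ∈ F_{d+1} the intersection F_1 ∩ ⋯ ∩ F_{d+1} is nonempty. Then there exists i ∈ {1, …, d+1} such that the intersection of all the sets in F_i is nonempty. -/
namespace ColorfulHelly

variable {d : ℕ}

/-- plain dot product on `Fin d → ℝ` -/
def ip (x y : Fin d → ℝ) : ℝ := ∑ i, x i * y i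

lemma ip_comm (x y : Fin d → ℝ) : ip x y = ip y x := by
  simp [ip, mul_comm]

lemma ip_add_right (x y z : Fin d → ℝ) : ip x (y + z) = ip x y + ip x z := by
  simp [ip, mul_add, Finset.sum_add_distrib]

lemma ip_sub_right (x y z : Fin d → ℝ) : ip x (y - z) = ip x y - ip x z := by
  simp [ip, mul_sub, Finset.sum_sub_distrib]

lemma ip_smul_right (x : Fin d → ℝ) (c : ℝ) (y : Fin d → ℝ) :
    ip x (c • y) = c * ip x y := by
  simp [ip, Finset.mul_sum, mul_comm, mul_left_comm, mul_assoc]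

lemma ip_sum_right {ι : Type*} (s : Finset ι) (x : Fin d → ℝ) (f : ι → (Fin d → ℝ)) :
    ip x (∑ j ∈ s, f j) = ∑ j ∈ s, ip x (f j) := by
  simp only [ip, Finset.sum_apply, Finset.mul_sum]
  rw [Finset.sum_comm]

lemma ip_self_nonneg (x : Fin d → ℝ) : 0 ≤ ip x x :=
  Finset.sum_nonneg fun _ _ => mul_self_nonneg _

lemma eq_zero_of_ip_self (x : Fin d → ℝ) (h : ip x x ≤ 0) : x = 0 := by
  have h0 : ip x x = 0 := le_antisymm h (ip_self_nonneg x)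
  have hall := (Finset.sum_eq_zero_iff_of_nonneg (fun i _ => mul_self_nonneg (x i))).1 h0
  funext i
  have h2 := hall i (Finset.mem_univ i)
  have : x i = 0 := by nlinarith
  simpa using this

lemma ip_sub_expand (x y : Fin d → ℝ) :
    ip (y - x) (y - x) = ip y y - 2 * ip x y + ip x x := by
  simp only [ip, Pi.sub_apply, mul_comm]
  rw [Finset.mul_sum, ← Finset.sum_sub_distrib, ← Finset.sum_add_distrib]
  exact Finset.sum_congr rfl fun i _ => by ring

lemma ip_add_smul_expand (x w : Fin d → ℝ) (t : ℝ) :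
    ip (x + t • w) (x + t • w) = ip x x + 2 * t * ip x w + t ^ 2 * ip w w := by
  simp only [ip, Pi.add_apply, Pi.smul_apply, smul_eq_mul]
  rw [Finset.mul_sum, Finset.mul_sum, ← Finset.sum_add_distrib, ← Finset.sum_add_distrib]
  exact Finset.sum_congr rfl fun i _ => by ring

/-- L2: if `y` is not farther than `x` from origin but `⟪x,y⟫ ≥ ⟪x,x⟫` then `y = x`. -/
lemma eq_of_ip (x y : Fin d → ℝ) (h1 : ip y y ≤ ip x x) (h2 : ip x x ≤ ip x y) : y = x := by
  have e := ip_sub_expand x y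
  have : y - x = 0 := eq_zero_of_ip_self _ (by rw [e]; linarith)
  exact sub_eq_zero.mp this

/-- L1: variational inequality for the `ip`-norm minimizer on a convex set. -/
lemma ip_min {C : Set (Fin d → ℝ)} (hC : Convex ℝ C) {x : Fin d → ℝ} (hx : x ∈ C)
    (hmin : ∀ w ∈ C, ip x x ≤ ip w w) {y : Fin d → ℝ} (hy : y ∈ C) :
    ip x x ≤ ip x y := by
  by_contra hlt
  push_neg at hlt
  set δ : ℝ := ip x x - ip x y with hδ
  have hδpos : 0 < δ := by simp [hδ]; linarith
  set w : Fin d → ℝ := y - x with hw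
  have hipw : ip x w = -δ := by rw [hw, ip_sub_right]; simp only [hδ]; ring
  set Qd : ℝ := ip w w with hQd
  have hQdnn : 0 ≤ Qd := ip_self_nonneg w
  have key : ∀ t : ℝ, 0 ≤ t → t ≤ 1 → 0 ≤ 2 * t * (-δ) + t ^ 2 * Qd := by
    intro t ht0 ht1
    have hmem : (1 - t) • x + t • y ∈ C := hC hx hy (by linarith) ht0 (by ring)
    have hrew : (1 - t) • x + t • y = x + t • w := by rw [hw]; module
    rw [hrew] at hmem
    have h5 := hmin _ hmem
    rw [ip_add_smul_expand, hipw] at h5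
    linarith
  rcases le_or_gt Qd δ with hc | hc
  · have := key 1 zero_le_one le_rfl
    nlinarith
  · have hQdpos : 0 < Qd := by linarith
    have ht1 : δ / Qd ≤ 1 := by rw [div_le_one hQdpos]; linarith
    have ht0 : 0 ≤ δ / Qd := by positivity
    have h6 := key (δ / Qd) ht0 ht1
    have h7 : 0 ≤ (2 * (δ / Qd) * (-δ) + (δ / Qd) ^ 2 * Qd) * Qd ^ 2 :=
      mul_nonneg h6 (by positivity)
    have h8 : (2 * (δ / Qd) * (-δ) + (δ / Qd) ^ 2 * Qd) * Qd ^ 2 = -(δ ^ 2 * Qd ^ 2 / Qd) := by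
      field_simp
      ring
    rw [h8] at h7
    have h9 : δ ^ 2 * Qd ^ 2 / Qd = δ ^ 2 * Qd := by field_simp
    rw [h9] at h7
    have : 0 < δ ^ 2 * Qd := by positivity
    linarith

/-- A point of the form `x + ∑ cᵢ • (yᵢ - x)` with `cᵢ ≥ 0`, `∑ cᵢ ≤ 1`, lies in a convex
set `C` containing `x` and all the `yᵢ` with nonzero coefficient. -/
lemma comb_mem {E : Type*} [AddCommGroup E] [Module ℝ E] {C : Set E} (hC : Convex ℝ C)
    {x : E} (hx : x ∈ C) {ι : Type*} [Fintype ι] [DecidableEq ι]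
    (y : ι → E) (c : ι → ℝ) (hc : ∀ i, 0 ≤ c i) (h1 : ∑ i, c i ≤ 1)
    (hy : ∀ i, c i ≠ 0 → y i ∈ C) :
    x + ∑ i, c i • (y i - x) ∈ C := by
  classical
  set s : Finset ι := Finset.univ.filter (fun i => c i ≠ 0) with hs
  have hmem_s : ∀ i, i ∈ s ↔ c i ≠ 0 := by intro i; simp [hs]
  have hzero : ∀ i ∈ Finset.univ, i ∉ s → c i • (y i - x) = 0 := by
    intro i _ hi
    have : c i = 0 := by by_contra h; exact hi ((hmem_s i).2 h)
    simp [this]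
  have hzero' : ∀ i ∈ Finset.univ, i ∉ s → c i = 0 := by
    intro i _ hi
    by_contra h; exact hi ((hmem_s i).2 h)
  have hsum1 : ∑ i ∈ s, c i • (y i - x) = ∑ i, c i • (y i - x) :=
    Finset.sum_subset (Finset.subset_univ s) hzero
  have hsum2 : ∑ i ∈ s, c i = ∑ i, c i :=
    Finset.sum_subset (Finset.subset_univ s) hzero'
  have hrew : x + ∑ i, c i • (y i - x)
      = (1 - ∑ i ∈ s, c i) • x + ∑ i ∈ s, c i • y i := by
    rw [← hsum1, sub_smul, one_smul, Finset.sum_smul]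
    rw [show ∑ i ∈ s, c i • (y i - x) = ∑ i ∈ s, (c i • y i - c i • x) from
      Finset.sum_congr rfl fun i _ => smul_sub _ _ _]
    rw [Finset.sum_sub_distrib]
    abel
  rw [hrew]
  -- now use `Convex.sum_mem` over `Option ι`
  set t : Finset (Option ι) := insert none (s.map Function.Embedding.some) with ht
  have hnone : (none : Option ι) ∉ s.map Function.Embedding.some := by simp
  set W : Option ι → ℝ := fun o => o.elim (1 - ∑ i ∈ s, c i) c with hW
  set P : Option ι → E := fun o => o.elim x y with hP
  have hWsum : ∀ f : Option ι → ℝ, True := fun _ => trivial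
  have hmap : ∀ (g : Option ι → E), ∑ o ∈ s.map Function.Embedding.some, g o
      = ∑ i ∈ s, g (some i) := by
    intro g; rw [Finset.sum_map]; rfl
  have hmapR : ∀ (g : Option ι → ℝ), ∑ o ∈ s.map Function.Embedding.some, g o
      = ∑ i ∈ s, g (some i) := by
    intro g; rw [Finset.sum_map]; rfl
  have key : ∑ o ∈ t, W o • P o ∈ C := by
    apply hC.sum_mem
    · intro o ho
      rcases o with _ | i
      · simp only [hW, Option.elim]
        rw [hsum2]; linarith
      · exact hc i
    · rw [ht, Finset.sum_insert hnone, hmapR]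
      simp only [hW, Option.elim]
      ring
    · intro o ho
      rcases o with _ | i
      · exact hx
      · rw [ht, Finset.mem_insert] at ho
        rcases ho with h | h
        · exact absurd h (by simp)
        · have : i ∈ s := by simpa using h
          exact hy i ((hmem_s i).1 this)
  rw [ht, Finset.sum_insert hnone, hmap] at key
  simpa [hW, hP] using key

/-- Any `d+1` vectors on the affine hyperplane `⟪x, ·⟫ = -1` (with `x ≠ 0`) admit an
affine dependence with both positive and negative coefficients. -/
lemma exists_dependence {d : ℕ} {x : Fin d → ℝ} (hx : 0 < ip x x)
    (u : Fin (d + 1) → (Fin d → ℝ)) (hu : ∀ i, ip x (u i) = -1) :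
    ∃ a : Fin (d + 1) → ℝ, (∑ i, a i = 0) ∧ (∑ i, a i • u i = 0) ∧
      (∃ i, 0 < a i) ∧ (∃ i, a i < 0) := by
  classical
  set v : Fin d → (Fin d → ℝ) := fun k => u k.succ - u 0 with hv
  have hipv : ∀ k, ip x (v k) = 0 := by
    intro k
    rw [hv]
    simp only []
    rw [ip_sub_right, hu, hu]
    ring
  have hd : d ≠ 0 := by
    rintro rfl
    simp [ip] at hx
  haveI : Nonempty (Fin d) := ⟨⟨0, Nat.pos_of_ne_zero hd⟩⟩
  have hnli : ¬ LinearIndependent ℝ v := by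
    intro h
    have hcard : Fintype.card (Fin d) = Module.finrank ℝ (Fin d → ℝ) := by simp
    have hrepr : ∑ k, (basisOfLinearIndependentOfCardEqFinrank h hcard).repr x k •
        (basisOfLinearIndependentOfCardEqFinrank h hcard) k = x :=
      Module.Basis.sum_repr _ x
    have hBk : ∀ k, (basisOfLinearIndependentOfCardEqFinrank h hcard) k = v k := fun k =>
      congrFun (coe_basisOfLinearIndependentOfCardEqFinrank h hcard) k
    have hzero : ip x x = 0 := by
      nth_rewrite 2 [← hrepr]
      rw [ip_sum_right]
      apply Finset.sum_eq_zero
      intro k _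
      rw [ip_smul_right, hBk, hipv]
      ring
    linarith
  obtain ⟨c, hc, k0, hk0⟩ := Fintype.not_linearIndependent_iff.1 hnli
  refine ⟨Fin.cons (-∑ k, c k) c, ?_, ?_, ?_⟩
  · rw [Fin.sum_univ_succ]
    simp only [Fin.cons_zero, Fin.cons_succ]
    ring
  · rw [Fin.sum_univ_succ]
    have hexp : ∑ k, c k • v k = ∑ k, c k • u k.succ - (∑ k, c k) • u 0 := by
      rw [Finset.sum_smul, ← Finset.sum_sub_distrib]
      exact Finset.sum_congr rfl fun k _ => by rw [hv]; simp [smul_sub]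
    rw [hexp] at hc
    simp only [Fin.cons_zero, Fin.cons_succ]
    have h2 : ∑ k : Fin d, c k • u k.succ = (∑ k, c k) • u 0 := by
      have := sub_eq_zero.mp hc
      linear_combination (norm := module) this
    rw [h2]
    module
  · constructor
    · by_contra h
      push_neg at h
      have hz := (Finset.sum_eq_zero_iff_of_nonpos (fun i _ => h i)).1
        (by rw [Fin.sum_univ_succ]; simp only [Fin.cons_zero, Fin.cons_succ]; ring)
      have := hz k0.succ (Finset.mem_univ _)
      rw [Fin.cons_succ] at this
      exact hk0 this
    · by_contra h
      push_neg at h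
      have hz := (Finset.sum_eq_zero_iff_of_nonneg (fun i _ => h i)).1
        (by rw [Fin.sum_univ_succ]; simp only [Fin.cons_zero, Fin.cons_succ]; ring)
      have := hz k0.succ (Finset.mem_univ _)
      rw [Fin.cons_succ] at this
      exact hk0 this

end ColorfulHelly

open ColorfulHelly in


/-- **The colorful Helly theorem (Lovász).** Let `F 0, …, F d` be finite nonempty
families of convex sets in `ℝ^d`.  If for every choice of one set from each family
the chosen sets have a common point, then some family `F i` has a common point. -/
theorem colorful_helly (d : ℕ) (F : Fin (d + 1) → Finset (Set (Fin d → ℝ)))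
    (hne : ∀ i, (F i).Nonempty)
    (hconv : ∀ i, ∀ A ∈ F i, Convex ℝ A)
    (hcross : ∀ f : Fin (d + 1) → Set (Fin d → ℝ),
      (∀ i, f i ∈ F i) → (⋂ i, f i).Nonempty) :
    ∃ i, (⋂ A ∈ F i, A).Nonempty := by
  classical
  -- transversals
  let T := ∀ i : Fin (d + 1), {A : Set (Fin d → ℝ) // A ∈ F i}
  haveI : Nonempty T := ⟨fun i => ⟨(hne i).choose, (hne i).choose_spec⟩⟩
  have hwit : ∀ f : T, ∃ p, p ∈ ⋂ i, (f i).1 := fun f => hcross _ (fun i => (f i).2)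
  choose w hw using hwit
  have hwmem : ∀ (f : T) (i), w f ∈ (f i).1 := fun f i => Set.mem_iInter.1 (hw f) i
  -- compactified sets
  let C : ∀ i : Fin (d + 1), {A : Set (Fin d → ℝ) // A ∈ F i} → Set (Fin d → ℝ) :=
    fun i A => convexHull ℝ (w '' {f : T | f i = A})
  have hCsub : ∀ i A, C i A ⊆ A.1 := by
    intro i A
    apply convexHull_min ?_ (hconv i A.1 A.2)
    rintro p ⟨f, hf, rfl⟩
    have h1 := hwmem f i
    rw [show f i = A from hf] at h1
    exact h1
  have hCconv : ∀ i A, Convex ℝ (C i A) := fun i A => convex_convexHull ℝ _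
  have hCcomp : ∀ i A, IsCompact (C i A) := fun i A =>
    Set.Finite.isCompact_convexHull (𝕜 := ℝ) ((Set.toFinite _).image w)
  have hCmem : ∀ (f : T) (i), w f ∈ C i (f i) := fun f i =>
    subset_convexHull ℝ _ ⟨f, rfl, rfl⟩
  -- intersections along transversals
  let K : T → Set (Fin d → ℝ) := fun f => ⋂ i, C i (f i)
  have hKne : ∀ f, (K f).Nonempty := fun f => ⟨w f, Set.mem_iInter.2 fun i => hCmem f i⟩
  have hKconv : ∀ f, Convex ℝ (K f) := fun f => convex_iInter fun i => hCconv _ _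
  have hKcomp : ∀ f, IsCompact (K f) := fun f =>
    (hCcomp 0 (f 0)).of_isClosed_subset
      (isClosed_iInter fun i => (hCcomp i (f i)).isClosed) (Set.iInter_subset _ 0)
  have hQcont : Continuous (fun p : Fin d → ℝ => ip p p) := by
    unfold ColorfulHelly.ip
    exact continuous_finset_sum _ fun i _ => (continuous_apply i).mul (continuous_apply i)
  have hminex : ∀ f : T, ∃ p, p ∈ K f ∧ ∀ q ∈ K f, ip p p ≤ ip q q := by
    intro f
    obtain ⟨p, hp, hmin⟩ := (hKcomp f).exists_isMinOn (hKne f) hQcont.continuousOn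
    exact ⟨p, hp, fun q hq => hmin hq⟩
  choose m hmK hmmin using hminex
  obtain ⟨fs, hfs⟩ := Finite.exists_max (fun f : T => ip (m f) (m f))
  set x := m fs with hxdef
  by_contra hcon
  push_neg at hcon
  have havoid : ∀ i, ∃ A, A ∈ F i ∧ x ∉ A := by
    intro i
    by_contra h
    push_neg at h
    have hx' : x ∈ ⋂ A ∈ F i, A := Set.mem_iInter₂.2 fun A hA => h A hA
    rw [hcon i] at hx'
    simpa using hx'
  choose A hAF hAx using havoid
  have hxK : x ∈ K fs := hmK fs
  -- degenerate case : `x = 0`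
  rcases le_or_gt (ip x x) 0 with hQx | hQx
  · let aT : T := fun i => ⟨A i, hAF i⟩
    have h1 : ip (m aT) (m aT) ≤ 0 := le_trans (hfs aT) hQx
    have h2 : m aT = 0 := eq_zero_of_ip_self _ h1
    have h3 : x = 0 := eq_zero_of_ip_self _ hQx
    have h4 : m aT ∈ A 0 := hCsub 0 (aT 0) (Set.mem_iInter.1 (hmK aT) 0)
    rw [h2, ← h3] at h4
    exact hAx 0 h4
  -- main case
  let g : Fin (d + 1) → T := fun i => Function.update fs i ⟨A i, hAF i⟩
  let y : Fin (d + 1) → (Fin d → ℝ) := fun i => m (g i)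
  have hyA : ∀ i, y i ∈ A i := by
    intro i
    have h1 : y i ∈ C i (g i i) := Set.mem_iInter.1 (hmK (g i)) i
    rw [show g i i = ⟨A i, hAF i⟩ from Function.update_self i _ fs] at h1
    exact hCsub i _ h1
  have hyfs : ∀ i j, i ≠ j → y i ∈ C j (fs j) := by
    intro i j hij
    have h1 : y i ∈ C j (g i j) := Set.mem_iInter.1 (hmK (g i)) j
    rwa [show g i j = fs j from Function.update_of_ne (Ne.symm hij) _ fs] at h1
  have hyQ : ∀ i, ip (y i) (y i) ≤ ip x x := fun i => hfs (g i)
  have hyne : ∀ i, y i ≠ x := fun i h => hAx i (h ▸ hyA i)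
  let dd : Fin (d + 1) → ℝ := fun i => ip x x - ip x (y i)
  have hddpos : ∀ i, 0 < dd i := by
    intro i
    by_contra h
    push_neg at h
    have h2 : ip x x ≤ ip x (y i) := by
      have : ip x x - ip x (y i) ≤ 0 := h
      linarith
    exact hyne i (eq_of_ip x (y i) (hyQ i) h2)
  let u : Fin (d + 1) → (Fin d → ℝ) := fun i => (dd i)⁻¹ • (y i - x)
  have hipu : ∀ i, ip x (u i) = -1 := by
    intro i
    show ip x ((dd i)⁻¹ • (y i - x)) = -1
    rw [ip_smul_right, ip_sub_right]
    rw [show ip x (y i) - ip x x = -(dd i) from by show _ = -(ip x x - ip x (y i)); ring]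
    rw [mul_neg, inv_mul_cancel₀ (hddpos i).ne']
  obtain ⟨a, hasum, halin, ⟨iP, hiP⟩, ⟨iN, hiN⟩⟩ := exists_dependence hQx u hipu
  let p : Fin (d + 1) → ℝ := fun i => max (a i) 0
  let n : Fin (d + 1) → ℝ := fun i => max (-(a i)) 0
  have hpnn : ∀ i, 0 ≤ p i := fun i => le_max_right _ _
  have hnnn : ∀ i, 0 ≤ n i := fun i => le_max_right _ _
  have hpn : ∀ i, a i = p i - n i := by
    intro i
    show a i = max (a i) 0 - max (-(a i)) 0
    rcases le_total (a i) 0 with h | h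
    · rw [max_eq_right h, max_eq_left (by linarith)]; ring
    · rw [max_eq_left h, max_eq_right (by linarith)]; ring
  have hpusum : ∑ i, p i • u i = ∑ i, n i • u i := by
    have h1 : ∑ i, (p i - n i) • u i = 0 := by
      rw [← halin]; exact Finset.sum_congr rfl fun i _ => by rw [← hpn]
    rw [show ∑ i, (p i - n i) • u i = ∑ i, p i • u i - ∑ i, n i • u i from by
      rw [← Finset.sum_sub_distrib]; exact Finset.sum_congr rfl fun i _ => sub_smul _ _ _] at h1
    linear_combination (norm := module) h1
  have hApos : 0 < ∑ i, p i :=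
    Finset.sum_pos' (fun i _ => hpnn i) ⟨iP, Finset.mem_univ _, lt_of_lt_of_le hiP (le_max_left _ _)⟩
  -- rescaled coefficients
  let b : Fin (d + 1) → ℝ := fun i => p i * (dd i)⁻¹
  let b' : Fin (d + 1) → ℝ := fun i => n i * (dd i)⁻¹
  have hbnn : ∀ i, 0 ≤ b i := fun i => mul_nonneg (hpnn i) (inv_nonneg.2 (hddpos i).le)
  have hbnn' : ∀ i, 0 ≤ b' i := fun i => mul_nonneg (hnnn i) (inv_nonneg.2 (hddpos i).le)
  have hbu : ∀ i, b i • (y i - x) = p i • u i := fun i => by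
    show (p i * (dd i)⁻¹) • (y i - x) = p i • ((dd i)⁻¹ • (y i - x))
    rw [smul_smul]
  have hbu' : ∀ i, b' i • (y i - x) = n i • u i := fun i => by
    show (n i * (dd i)⁻¹) • (y i - x) = n i • ((dd i)⁻¹ • (y i - x))
    rw [smul_smul]
  set ε : ℝ := (1 + ∑ i, b i + ∑ i, b' i)⁻¹ with hεdef
  have hdenpos : 0 < 1 + ∑ i, b i + ∑ i, b' i := by
    have h1 : 0 ≤ ∑ i, b i := Finset.sum_nonneg fun i _ => hbnn i
    have h2 : 0 ≤ ∑ i, b' i := Finset.sum_nonneg fun i _ => hbnn' i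
    linarith
  have hεpos : 0 < ε := inv_pos.2 hdenpos
  have hεb : ε * ∑ i, b i ≤ 1 := by
    rw [hεdef, inv_mul_le_iff₀ hdenpos]
    have h2 : 0 ≤ ∑ i, b' i := Finset.sum_nonneg fun i _ => hbnn' i
    linarith
  have hεb' : ε * ∑ i, b' i ≤ 1 := by
    rw [hεdef, inv_mul_le_iff₀ hdenpos]
    have h1 : 0 ≤ ∑ i, b i := Finset.sum_nonneg fun i _ => hbnn i
    linarith
  let c : Fin (d + 1) → ℝ := fun i => ε * b i
  let c' : Fin (d + 1) → ℝ := fun i => ε * b' i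
  have hcnn : ∀ i, 0 ≤ c i := fun i => mul_nonneg hεpos.le (hbnn i)
  have hcnn' : ∀ i, 0 ≤ c' i := fun i => mul_nonneg hεpos.le (hbnn' i)
  have hcsum : ∑ i, c i ≤ 1 := by
    rw [show ∑ i, c i = ε * ∑ i, b i from by rw [Finset.mul_sum]]
    exact hεb
  have hcsum' : ∑ i, c' i ≤ 1 := by
    rw [show ∑ i, c' i = ε * ∑ i, b' i from by rw [Finset.mul_sum]]
    exact hεb'
  have hvv : ∑ i, c i • (y i - x) = ∑ i, c' i • (y i - x) := by
    have e1 : ∑ i, c i • (y i - x) = ε • ∑ i, p i • u i := by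
      rw [Finset.smul_sum]
      exact Finset.sum_congr rfl fun i _ => by
        rw [← hbu]; show (ε * b i) • (y i - x) = ε • (b i • (y i - x)); rw [smul_smul]
    have e2 : ∑ i, c' i • (y i - x) = ε • ∑ i, n i • u i := by
      rw [Finset.smul_sum]
      exact Finset.sum_congr rfl fun i _ => by
        rw [← hbu']; show (ε * b' i) • (y i - x) = ε • (b' i • (y i - x)); rw [smul_smul]
    rw [e1, e2, hpusum]
  let z : Fin d → ℝ := x + ∑ i, c i • (y i - x)
  have hzK : z ∈ K fs := by
    apply Set.mem_iInter.2
    intro j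
    have hxCj : x ∈ C j (fs j) := Set.mem_iInter.1 hxK j
    rcases le_or_gt (a j) 0 with hja | hja
    · have hcj : c j = 0 := by
        show ε * (p j * (dd j)⁻¹) = 0
        rw [show p j = 0 from max_eq_right hja]
        ring
      apply comb_mem (hCconv j (fs j)) hxCj y c hcnn hcsum
      intro i hci
      have hij : i ≠ j := by rintro rfl; exact hci hcj
      exact hyfs i j hij
    · have hcj : c' j = 0 := by
        show ε * (n j * (dd j)⁻¹) = 0
        rw [show n j = 0 from max_eq_right (by linarith)]
        ring
      show x + ∑ i, c i • (y i - x) ∈ C j (fs j)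
      rw [hvv]
      apply comb_mem (hCconv j (fs j)) hxCj y c' hcnn' hcsum'
      intro i hci
      have hij : i ≠ j := by rintro rfl; exact hci hcj
      exact hyfs i j hij
  have hfinal : ip x x ≤ ip x z := ip_min (hKconv fs) hxK (hmmin fs) hzK
  have hipz : ip x z = ip x x - ε * ∑ i, p i := by
    show ip x (x + ∑ i, c i • (y i - x)) = _
    rw [ip_add_right, ip_sum_right]
    have e3 : ∀ i ∈ Finset.univ, ip x (c i • (y i - x)) = -(ε * p i) := by
      intro i _
      rw [ip_smul_right, ip_sub_right]
      rw [show ip x (y i) - ip x x = -(dd i) from by show _ = -(ip x x - ip x (y i)); ring]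
      show ε * (p i * (dd i)⁻¹) * -(dd i) = -(ε * p i)
      rw [show ε * (p i * (dd i)⁻¹) * -(dd i) = -(ε * p i * ((dd i)⁻¹ * dd i)) from by ring,
        inv_mul_cancel₀ (hddpos i).ne']
      ring
    rw [Finset.sum_congr rfl e3]
    rw [Finset.sum_neg_distrib]
    rw [← Finset.mul_sum]
    ring
  rw [hipz] at hfinal
  have : 0 < ε * ∑ i, p i := mul_pos hεpos hApos
  linarith
end

section
/- (Fractional Helly theorem, Katchalski–Liu.) For every real a ∈ (0,1] and every d ∈ ℕ there exists b = b(d,a) ∈ (0,1] with the following property: if C_1, …, C_n are convex sets in ℝ^d with n ≥ d+1, and the number of (d+1)-element subsets of {1,…,n} whose corresponding sets have a common point is at least a·C(n,d+1), then there is a point of ℝ^d contained in at least b·n of the sets C_1, …, C_n. -/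
open scoped Classical

section FracHellyAux

variable {d : ℕ}

/-- Lexicographic order on `Fin d → ℝ`: at every index where all earlier coordinates agree,
the coordinate of `x` is at most that of `y`. -/
def fhLexLE (x y : Fin d → ℝ) : Prop := ∀ j : Fin d, (∀ i < j, x i = y i) → x j ≤ y j

lemma fhLexLE_refl (x : Fin d → ℝ) : fhLexLE x x := fun _ _ => le_rfl

lemma fhLexLE_antisymm {x y : Fin d → ℝ} (h1 : fhLexLE x y) (h2 : fhLexLE y x) : x = y := by
  have key : ∀ m : ℕ, ∀ j : Fin d, (j : ℕ) = m → x j = y j := by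
    intro m
    induction m using Nat.strong_induction_on with
    | _ m ih =>
      intro j hj
      have hag : ∀ i < j, x i = y i := fun i hi => ih (i : ℕ) (hj ▸ hi) i rfl
      exact le_antisymm (h1 j hag) (h2 j fun i hi => (hag i hi).symm)
  funext j
  exact key (j : ℕ) j rfl

lemma fhLexLE_of_lt_at {x y : Fin d → ℝ} {j₀ : Fin d} (hlt : x j₀ < y j₀)
    (hag : ∀ i < j₀, x i = y i) : fhLexLE x y := by
  intro j hj
  rcases lt_trichotomy j j₀ with h | h | h
  · exact (hag j h).le
  · subst h; exact hlt.le
  · exact absurd (hj j₀ h) hlt.ne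

/-- If `x ≠ y` then there is a first index of disagreement. -/
lemma fhLex_first_diff {x y : Fin d → ℝ} (h : x ≠ y) :
    ∃ j₀ : Fin d, x j₀ ≠ y j₀ ∧ ∀ i < j₀, x i = y i := by
  have hne : ∃ j, x j ≠ y j := Function.ne_iff.mp h
  set T : Finset (Fin d) := Finset.univ.filter (fun j => x j ≠ y j) with hT
  have hTne : T.Nonempty := ⟨hne.choose, by simp [hT, hne.choose_spec]⟩
  refine ⟨T.min' hTne, ?_, ?_⟩
  · have := T.min'_mem hTne
    simp only [hT, Finset.mem_filter] at this
    exact this.2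
  · intro i hi
    by_contra hne'
    exact absurd (T.min'_le i (by simp [hT, hne'])) (not_le.mpr hi)

lemma fhLexLT_of_not_le {x y : Fin d → ℝ} (h : ¬ fhLexLE x y) :
    fhLexLE y x ∧ y ≠ x := by
  have hne : x ≠ y := by rintro rfl; exact h (fhLexLE_refl x)
  obtain ⟨j₀, hj₀, hag⟩ := fhLex_first_diff hne
  rcases lt_or_gt_of_ne hj₀ with hlt | hgt
  · exact absurd (fhLexLE_of_lt_at hlt hag) h
  · exact ⟨fhLexLE_of_lt_at hgt (fun i hi => (hag i hi).symm), fun he => hne (he.symm)⟩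

lemma fhLexLT_iff {x v : Fin d → ℝ} :
    (fhLexLE x v ∧ x ≠ v) ↔ ∃ j : Fin d, x j < v j ∧ ∀ i < j, x i = v i := by
  constructor
  · rintro ⟨hle, hne⟩
    obtain ⟨j₀, hj₀, hag⟩ := fhLex_first_diff hne
    exact ⟨j₀, lt_of_le_of_ne (hle j₀ hag) hj₀, hag⟩
  · rintro ⟨j, hj, hag⟩
    exact ⟨fhLexLE_of_lt_at hj hag, fun he => absurd (congrFun he j) hj.ne⟩

/-- The strict lexicographic lower set of a point is convex. -/
lemma fhConvex_lexLT (v : Fin d → ℝ) : Convex ℝ {x | fhLexLE x v ∧ x ≠ v} := by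
  intro x hx y hy s t hs ht hst
  rcases eq_or_lt_of_le hs with hs0 | hs0
  · have : s • x + t • y = y := by
      funext i; simp [← hs0, show t = 1 by linarith]
    rw [this]; exact hy
  rcases eq_or_lt_of_le ht with ht0 | ht0
  · have : s • x + t • y = x := by
      funext i; simp [← ht0, show s = 1 by linarith]
    rw [this]; exact hx
  obtain ⟨jx, hjx, hagx⟩ := fhLexLT_iff.mp hx
  obtain ⟨jy, hjy, hagy⟩ := fhLexLT_iff.mp hy
  refine fhLexLT_iff.mpr ⟨min jx jy, ?_, ?_⟩
  · have hxj : x (min jx jy) ≤ v (min jx jy) := by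
      rcases lt_or_ge (min jx jy) jx with h | h
      · exact (hagx _ h).le
      · have : min jx jy = jx := le_antisymm (min_le_left _ _) h
        rw [this]; exact hjx.le
    have hyj : y (min jx jy) ≤ v (min jx jy) := by
      rcases lt_or_ge (min jx jy) jy with h | h
      · exact (hagy _ h).le
      · have : min jx jy = jy := le_antisymm (min_le_right _ _) h
        rw [this]; exact hjy.le
    have hstrict : x (min jx jy) < v (min jx jy) ∨ y (min jx jy) < v (min jx jy) := by
      rcases le_total jx jy with h | h
      · left; rw [min_eq_left h]; exact hjx
      · right; rw [min_eq_right h]; exact hjy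
    have : s • x + t • y = fun i => s * x i + t * y i := rfl
    rw [this]
    simp only
    have hsum : s * v (min jx jy) + t * v (min jx jy) = v (min jx jy) := by
      rw [← add_mul, hst, one_mul]
    rcases hstrict with h | h
    · have h1 := mul_lt_mul_of_pos_left h hs0
      have h2 := mul_le_mul_of_nonneg_left hyj ht
      linarith
    · have h1 := mul_le_mul_of_nonneg_left hxj hs
      have h2 := mul_lt_mul_of_pos_left h ht0
      linarith
  · intro i hi
    have h1 : x i = v i := hagx i (lt_of_lt_of_le hi (min_le_left _ _))
    have h2 : y i = v i := hagy i (lt_of_lt_of_le hi (min_le_right _ _))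
    show s * x i + t * y i = v i
    rw [h1, h2, ← add_mul, hst, one_mul]

/-- The iterated argmin chain used to construct the lexicographic minimum. -/
def fhChain (K : Set (Fin d → ℝ)) : ℕ → Set (Fin d → ℝ)
  | 0 => K
  | (j+1) =>
      if h : j < d then
        {x ∈ fhChain K j | ∀ y ∈ fhChain K j, x ⟨j, h⟩ ≤ y ⟨j, h⟩}
      else fhChain K j

lemma fhChain_antitone (K : Set (Fin d → ℝ)) : Antitone (fhChain K) := by
  apply antitone_nat_of_succ_le
  intro j
  by_cases h : j < d
  · rw [fhChain, dif_pos h]; exact Set.sep_subset _ _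
  · rw [fhChain, dif_neg h]

lemma fhChain_basic {K : Set (Fin d → ℝ)} (hK : IsCompact K) (hne : K.Nonempty) :
    ∀ j, IsCompact (fhChain K j) ∧ (fhChain K j).Nonempty ∧ fhChain K j ⊆ K := by
  intro j
  induction j with
  | zero => exact ⟨hK, hne, subset_rfl⟩
  | succ j ih =>
    obtain ⟨ihc, ihne, ihsub⟩ := ih
    by_cases h : j < d
    · rw [fhChain, dif_pos h]
      have heq : {x ∈ fhChain K j | ∀ y ∈ fhChain K j, x ⟨j, h⟩ ≤ y ⟨j, h⟩}
          = fhChain K j ∩ ⋂ y ∈ fhChain K j, {x | x ⟨j, h⟩ ≤ y ⟨j, h⟩} := by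
        ext x; simp [Set.mem_iInter]
      have hclosed : IsClosed (⋂ y ∈ fhChain K j, {x : Fin d → ℝ | x ⟨j, h⟩ ≤ y ⟨j, h⟩}) :=
        isClosed_biInter fun y _ => isClosed_le (continuous_apply _) continuous_const
      constructor
      · rw [heq]; exact ihc.inter_right hclosed
      constructor
      · obtain ⟨x, hx, hmin⟩ := ihc.exists_isMinOn ihne
          ((continuous_apply (⟨j, h⟩ : Fin d)).continuousOn)
        exact ⟨x, hx, fun y hy => hmin hy⟩
      · exact (Set.sep_subset _ _).trans ihsub
    · rw [fhChain, dif_neg h]; exact ⟨ihc, ihne, ihsub⟩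

/-- Every nonempty compact set has a lexicographic minimum. -/
lemma fhExists_lexmin {K : Set (Fin d → ℝ)} (hK : IsCompact K) (hne : K.Nonempty) :
    ∃ v ∈ K, ∀ y ∈ K, fhLexLE v y := by
  obtain ⟨-, ⟨v, hv⟩, hsub⟩ := fhChain_basic hK hne d
  refine ⟨v, hsub hv, ?_⟩
  have hprop : ∀ j ≤ d, ∀ y ∈ K, (∀ i : Fin d, (i : ℕ) < j → y i = v i) → y ∈ fhChain K j := by
    intro j
    induction j with
    | zero => intro _ y hy _; exact hy
    | succ j ih =>
      intro hj y hy hag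
      have hjd : j < d := hj
      rw [fhChain, dif_pos hjd]
      have hyj : y ∈ fhChain K j :=
        ih (le_of_lt hj) y hy (fun i hi => hag i (Nat.lt_succ_of_lt hi))
      refine ⟨hyj, ?_⟩
      have hvj1 : v ∈ fhChain K (j + 1) := fhChain_antitone K hj hv
      rw [fhChain, dif_pos hjd] at hvj1
      intro z hz
      have : y ⟨j, hjd⟩ = v ⟨j, hjd⟩ := hag ⟨j, hjd⟩ (Nat.lt_succ_self j)
      rw [this]
      exact hvj1.2 z hz
  intro y hy j hag
  have hyj : y ∈ fhChain K (j : ℕ) := by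
    apply hprop j (le_of_lt j.isLt) y hy
    intro i hi
    exact (hag i (by exact hi)).symm
  have hvj : v ∈ fhChain K ((j : ℕ) + 1) := fhChain_antitone K j.isLt hv
  rw [fhChain, dif_pos j.isLt] at hvj
  have := hvj.2 y hyj
  simpa using this

end FracHellyAux

variable {d : ℕ}

/-- Key lemma: if `v` is the lex-minimum of the intersection of convex sets indexed by `M`,
then it is already the lex-minimum of the intersection of some `d` of them. -/
lemma fhLexmin_det {n : ℕ} (C : Fin n → Set (Fin d → ℝ)) (hC : ∀ i, Convex ℝ (C i))
    (M : Finset (Fin n)) (hM : d ≤ M.card) {v : Fin d → ℝ}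
    (hvmem : v ∈ ⋂ i ∈ M, C i) (hvmin : ∀ y ∈ ⋂ i ∈ M, C i, fhLexLE v y) :
    ∃ N ⊆ M, N.card = d ∧ v ∈ (⋂ i ∈ N, C i) ∧ ∀ y ∈ ⋂ i ∈ N, C i, fhLexLE v y := by
  by_contra hcon
  push_neg at hcon
  -- for each N, there is a lex-smaller point in the intersection over N
  have hy : ∀ N, N ⊆ M → N.card = d →
      ∃ y, y ∈ (⋂ i ∈ N, C i) ∧ fhLexLE y v ∧ y ≠ v := by
    intro N hNM hNcard
    have hvN : v ∈ ⋂ i ∈ N, C i := by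
      refine Set.mem_iInter₂.mpr fun i hi => Set.mem_iInter₂.mp hvmem i (hNM hi)
    obtain ⟨y, hy1, hy2⟩ := by
      have := hcon N hNM hNcard hvN
      exact this
    obtain ⟨h1, h2⟩ := fhLexLT_of_not_le hy2
    exact ⟨y, hy1, h1, h2⟩
  -- Helly family indexed by `Option (Fin n)`
  set L : Set (Fin d → ℝ) := {x | fhLexLE x v ∧ x ≠ v} with hL
  set F : Option (Fin n) → Set (Fin d → ℝ) := fun o => o.elim L C with hF
  set s : Finset (Option (Fin n)) := insert none (M.image some) with hs
  have hrank : Module.finrank ℝ (Fin d → ℝ) = d := Module.finrank_fin_fun ℝ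
  have hHelly : (⋂ i ∈ s, F i).Nonempty := by
    apply Convex.helly_theorem' (𝕜 := ℝ)
    · intro i hi
      match i with
      | none => exact fhConvex_lexLT v
      | some i => exact hC i
    · intro I hIs hIcard
      rw [hrank] at hIcard
      by_cases hnone : none ∈ I
      · set N₀ : Finset (Fin n) := M.filter (fun i => some i ∈ I) with hN₀
        have hN₀card : N₀.card ≤ d := by
          have himg : N₀.image some ⊆ I.erase none := by
            intro x hx
            simp only [hN₀, Finset.mem_image, Finset.mem_filter] at hx
            obtain ⟨i, ⟨_, hiI⟩, rfl⟩ := hx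
            exact Finset.mem_erase.mpr ⟨Option.some_ne_none i, hiI⟩
          have h1 : (N₀.image some).card = N₀.card :=
            Finset.card_image_of_injective _ (Option.some_injective _)
          have h2 : (I.erase none).card = I.card - 1 := Finset.card_erase_of_mem hnone
          have := Finset.card_le_card himg
          omega
        obtain ⟨N, hN₀N, hNM, hNcard⟩ :=
          Finset.exists_subsuperset_card_eq (Finset.filter_subset _ _) hN₀card hM
        obtain ⟨y, hy1, hy2, hy3⟩ := hy N hNM hNcard
        refine ⟨y, Set.mem_iInter₂.mpr fun o ho => ?_⟩
        match o with
        | none => exact ⟨hy2, hy3⟩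
        | some i =>
          have hiM : i ∈ M := by
            have := hIs ho
            simp only [hs, Finset.mem_insert, Finset.mem_image] at this
            rcases this with h | ⟨j, hj, hji⟩
            · exact absurd h (Option.some_ne_none i)
            · rwa [← Option.some_injective _ hji]
          have : i ∈ N := hN₀N (Finset.mem_filter.mpr ⟨hiM, ho⟩)
          exact Set.mem_iInter₂.mp hy1 i this
      · refine ⟨v, Set.mem_iInter₂.mpr fun o ho => ?_⟩
        match o with
        | none => exact absurd ho hnone
        | some i =>
          have hiM : i ∈ M := by
            have := hIs ho
            simp only [hs, Finset.mem_insert, Finset.mem_image] at this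
            rcases this with h | ⟨j, hj, hji⟩
            · exact absurd h (Option.some_ne_none i)
            · rwa [← Option.some_injective _ hji]
          exact Set.mem_iInter₂.mp hvmem i hiM
  obtain ⟨w, hw⟩ := hHelly
  have hwL : w ∈ L := Set.mem_iInter₂.mp hw none (Finset.mem_insert_self _ _)
  have hwM : w ∈ ⋂ i ∈ M, C i := by
    refine Set.mem_iInter₂.mpr fun i hi => ?_
    exact Set.mem_iInter₂.mp hw (some i)
      (Finset.mem_insert_of_mem (Finset.mem_image_of_mem some hi))
  exact hwL.2 (fhLexLE_antisymm hwL.1 (hvmin w hwM))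

/-- **The fractional Helly theorem (Katchalski–Liu).** For every `a ∈ (0,1]` and every `d`
there is `b = b(d,a) ∈ (0,1]` such that: whenever `C 1, …, C n` are convex sets in `ℝ^d`
with `n ≥ d + 1` and at least `a * (n choose (d+1))` of the `(d+1)`-element index sets have
a common point, some point of `ℝ^d` lies in at least `b * n` of the sets. -/
theorem fractional_helly (d : ℕ) (a : ℝ) (ha : a ∈ Set.Ioc (0 : ℝ) 1) :
    ∃ b ∈ Set.Ioc (0 : ℝ) 1, ∀ n : ℕ, d + 1 ≤ n →
      ∀ C : Fin n → Set (Fin d → ℝ), (∀ i, Convex ℝ (C i)) →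
      a * (n.choose (d + 1) : ℝ) ≤
        ((Finset.univ.filter fun S : Finset (Fin n) =>
          S.card = d + 1 ∧ (⋂ i ∈ S, C i).Nonempty).card : ℝ) →
      ∃ p : Fin d → ℝ, b * (n : ℝ) ≤ ((Finset.univ.filter fun i => p ∈ C i).card : ℝ) := by
  obtain ⟨ha0, ha1⟩ := ha
  have hd0 : (0:ℝ) ≤ (d:ℝ) := Nat.cast_nonneg d
  have hd1 : (0:ℝ) < 2 * ((d:ℝ) + 1) := by positivity
  refine ⟨a / (2 * ((d:ℝ) + 1)), ⟨by positivity, ?_⟩, ?_⟩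
  · rw [div_le_one hd1]; linarith
  intro n hn C hconv hcount
  by_contra hcon
  push_neg at hcon
  set G := Finset.univ.filter (fun S : Finset (Fin n) =>
    S.card = d + 1 ∧ (⋂ i ∈ S, C i).Nonempty) with hGdef
  have hdn : d ≤ n := by omega
  have hchoosepos : 0 < (n.choose (d+1) : ℝ) := by exact_mod_cast Nat.choose_pos hn
  have hGcpos : (0:ℝ) < (G.card : ℝ) := lt_of_lt_of_le (mul_pos ha0 hchoosepos) hcount
  have hGne : G.Nonempty := Finset.card_pos.mp (by exact_mod_cast hGcpos)
  -- witness points for good (d+1)-sets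
  have hwex : ∀ S ∈ G, ∃ p, p ∈ ⋂ i ∈ S, C i := fun S hS => (Finset.mem_filter.mp hS).2.2
  choose! w hwmem using hwex
  have hScard : ∀ S ∈ G, S.card = d + 1 := fun S hS => (Finset.mem_filter.mp hS).2.1
  -- shrink each set to a polytope spanned by the relevant witnesses
  set C' : Fin n → Set (Fin d → ℝ) :=
    fun i => convexHull ℝ (w '' {S | S ∈ G ∧ i ∈ S}) with hC'def
  have hC'conv : ∀ i, Convex ℝ (C' i) := fun i => convex_convexHull ℝ _
  have hC'sub : ∀ i, C' i ⊆ C i := by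
    intro i
    apply convexHull_min _ (hconv i)
    rintro p ⟨S, ⟨hSG, hiS⟩, rfl⟩
    exact Set.mem_iInter₂.mp (hwmem S hSG) i hiS
  have hC'cpt : ∀ i, IsCompact (C' i) := by
    intro i
    apply Set.Finite.isCompact_convexHull
    exact (G.finite_toSet.subset (fun S hS => hS.1)).image w
  have hwC' : ∀ S ∈ G, w S ∈ ⋂ i ∈ S, C' i := by
    intro S hS
    exact Set.mem_iInter₂.mpr fun i hi => subset_convexHull ℝ _ ⟨S, ⟨hS, hi⟩, rfl⟩
  -- lexicographic minima of the shrunken intersections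
  have hKS : ∀ S ∈ G, ∃ z, z ∈ (⋂ i ∈ S, C' i) ∧ ∀ y ∈ ⋂ i ∈ S, C' i, fhLexLE z y := by
    intro S hS
    have hSne : S.Nonempty := Finset.card_pos.mp (by rw [hScard S hS]; omega)
    obtain ⟨i₀, hi₀⟩ := hSne
    have hclosed : IsClosed (⋂ i ∈ S, C' i) :=
      isClosed_biInter (fun i _ => (hC'cpt i).isClosed)
    have hcpt : IsCompact (⋂ i ∈ S, C' i) :=
      (hC'cpt i₀).of_isClosed_subset hclosed (Set.biInter_subset_of_mem hi₀)
    exact fhExists_lexmin hcpt ⟨w S, hwC' S hS⟩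
  choose! v hv1 hv2 using hKS
  -- the lexmin of each good set is determined by d of the sets
  have hNex : ∀ S ∈ G, ∃ N, N ⊆ S ∧ N.card = d ∧ (v S ∈ ⋂ i ∈ N, C' i) ∧
      ∀ y ∈ ⋂ i ∈ N, C' i, fhLexLE (v S) y := by
    intro S hS
    exact fhLexmin_det C' hC'conv S (by rw [hScard S hS]; omega) (hv1 S hS) (hv2 S hS)
  choose! N hN1 hN2 hN3 hN4 using hNex
  -- a canonical lexmin point for each d-subset
  have hexu : ∀ N' : Finset (Fin n), ∃ z : Fin d → ℝ,
      (∃ z', z' ∈ (⋂ i ∈ N', C' i) ∧ ∀ y ∈ ⋂ i ∈ N', C' i, fhLexLE z' y) →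
      (z ∈ (⋂ i ∈ N', C' i) ∧ ∀ y ∈ ⋂ i ∈ N', C' i, fhLexLE z y) := by
    intro N'
    by_cases h : ∃ z', z' ∈ (⋂ i ∈ N', C' i) ∧ ∀ y ∈ ⋂ i ∈ N', C' i, fhLexLE z' y
    · obtain ⟨z, hz⟩ := h; exact ⟨z, fun _ => hz⟩
    · exact ⟨fun _ => 0, fun hh => absurd hh h⟩
  choose u hu' using hexu
  have hu : ∀ S ∈ G, u (N S) = v S := by
    intro S hS
    obtain ⟨hz1, hz2⟩ := hu' (N S) ⟨v S, hN3 S hS, hN4 S hS⟩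
    exact fhLexLE_antisymm (hz2 _ (hN3 S hS)) ((hN4 S hS) _ hz1)
  -- the removed element
  have hsingle : ∀ S ∈ G, ∃ x, S \ N S = {x} := by
    intro S hS
    apply Finset.card_eq_one.mp
    have := Finset.card_sdiff_of_subset (hN1 S hS)
    rw [hScard S hS, hN2 S hS] at this
    omega
  have hFinNe : Nonempty (Fin n) := ⟨⟨0, by omega⟩⟩
  choose! e he using hsingle
  have heS : ∀ S ∈ G, e S ∈ S := by
    intro S hS
    have : e S ∈ S \ N S := by rw [he S hS]; exact Finset.mem_singleton_self _
    exact (Finset.mem_sdiff.mp this).1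
  have hSrec : ∀ S ∈ G, S = N S ∪ {e S} := by
    intro S hS
    rw [← he S hS, Finset.union_sdiff_of_subset (hN1 S hS)]
  -- injection into a sigma finset
  set T := (Finset.univ.powersetCard d).sigma
      (fun N' : Finset (Fin n) => Finset.univ.filter (fun i => u N' ∈ C i)) with hTdef
  have hinj : G.card ≤ T.card := by
    apply Finset.card_le_card_of_injOn
      (fun S => (⟨N S, e S⟩ : Σ _ : Finset (Fin n), Fin n))
    · intro S hS
      rw [hTdef, Finset.mem_coe, Finset.mem_sigma]
      refine ⟨Finset.mem_powersetCard.mpr ⟨Finset.subset_univ _, hN2 S hS⟩, ?_⟩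
      rw [Finset.mem_filter]
      refine ⟨Finset.mem_univ _, ?_⟩
      rw [hu S hS]
      exact hC'sub _ (Set.mem_iInter₂.mp (hv1 S hS) (e S) (heS S hS))
    · intro S hS S' hS' hEq
      simp only [Finset.mem_coe] at hS hS'
      obtain ⟨h1, h2⟩ := Sigma.mk.inj_iff.mp hEq
      have h2' : e S = e S' := eq_of_heq h2
      rw [hSrec S hS, hSrec S' hS', h1, h2']
  have hTcard : T.card = ∑ N' ∈ Finset.univ.powersetCard d,
      (Finset.univ.filter (fun i => u N' ∈ C i)).card := Finset.card_sigma _ _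
  have hpne : (Finset.univ.powersetCard d : Finset (Finset (Fin n))).Nonempty := by
    rw [← Finset.card_pos, Finset.card_powersetCard, Finset.card_univ, Fintype.card_fin]
    exact Nat.choose_pos hdn
  have hsum : (T.card : ℝ) < (n.choose d : ℝ) * (a / (2 * ((d:ℝ) + 1)) * n) := by
    rw [hTcard]
    push_cast
    calc ∑ N' ∈ Finset.univ.powersetCard d,
          ((Finset.univ.filter (fun i => u N' ∈ C i)).card : ℝ)
        < ∑ _N' ∈ Finset.univ.powersetCard d, a / (2 * ((d:ℝ) + 1)) * n :=
          Finset.sum_lt_sum_of_nonempty hpne (fun N' _ => hcon (u N'))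
      _ = (n.choose d : ℝ) * (a / (2 * ((d:ℝ) + 1)) * n) := by
          rw [Finset.sum_const, Finset.card_powersetCard, Finset.card_univ, Fintype.card_fin,
            nsmul_eq_mul]
  have hmain : a * (n.choose (d+1) : ℝ) < (n.choose d : ℝ) * (a / (2 * ((d:ℝ) + 1)) * n) :=
    lt_of_le_of_lt (hcount.trans (by exact_mod_cast hinj)) hsum
  -- a single good set shows n is large
  obtain ⟨S₀, hS₀⟩ := hGne
  have hdegS₀ : (d:ℝ) + 1 ≤ ((Finset.univ.filter (fun i => w S₀ ∈ C i)).card : ℝ) := by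
    have hsub : S₀ ⊆ Finset.univ.filter (fun i => w S₀ ∈ C i) := by
      intro i hi
      exact Finset.mem_filter.mpr ⟨Finset.mem_univ _, Set.mem_iInter₂.mp (hwmem S₀ hS₀) i hi⟩
    have hcard := Finset.card_le_card hsub
    rw [hScard S₀ hS₀] at hcard
    exact_mod_cast hcard
  have hbig : (d:ℝ) + 1 < a / (2 * ((d:ℝ) + 1)) * n := lt_of_le_of_lt hdegS₀ (hcon _)
  have hbig2 : 2 * ((d:ℝ) + 1)^2 < n := by
    have h2 := mul_lt_mul_of_pos_right hbig hd1
    have h3 : a / (2 * ((d:ℝ) + 1)) * n * (2 * ((d:ℝ)+1)) = a * n := by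
      field_simp
    have h4 : a * n ≤ n := by nlinarith [Nat.cast_nonneg (α := ℝ) n]
    nlinarith
  -- the binomial identity
  have hid : (n.choose (d+1) : ℝ) * ((d:ℝ) + 1) = (n.choose d : ℝ) * ((n:ℝ) - d) := by
    have h := Nat.choose_succ_right_eq n d
    have hcast := congrArg (fun k : ℕ => (k : ℝ)) h
    simp only [Nat.cast_mul, Nat.cast_add, Nat.cast_one, Nat.cast_sub hdn] at hcast
    linarith
  have hCd : (0:ℝ) < (n.choose d : ℝ) := by exact_mod_cast Nat.choose_pos hdn
  have h5 := mul_lt_mul_of_pos_right hmain (by positivity : (0:ℝ) < (d:ℝ)+1)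
  have h5' : (a * (n.choose d:ℝ)) * ((n:ℝ) - d) < (a * (n.choose d:ℝ)) * ((n:ℝ)/2) := by
    calc (a * (n.choose d:ℝ)) * ((n:ℝ) - d)
        = a * ((n.choose (d+1) : ℝ) * ((d:ℝ) + 1)) := by rw [hid]; ring
      _ = a * (n.choose (d+1) : ℝ) * ((d:ℝ)+1) := by ring
      _ < (n.choose d : ℝ) * (a / (2 * ((d:ℝ) + 1)) * n) * ((d:ℝ)+1) := h5
      _ = (a * (n.choose d:ℝ)) * ((n:ℝ)/2) := by field_simp
  have h6 : (n:ℝ) - d < (n:ℝ)/2 := (mul_lt_mul_iff_right₀ (mul_pos ha0 hCd)).mp h5'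
  nlinarith [sq_nonneg ((d:ℝ)+1)]
end

section
/- There exist six nonempty convex sets in ℝ² that have the (4,3) property but cannot be pierced by 2 points; that is, their piercing number is at least 3 (hence C(4,3,2) ≥ 3). -/
namespace C43
abbrev Pt := Fin 2 → ℝ
def L (a b c : ℝ) : Set Pt := {x | 0 ≤ a * x 0 + b * x 1 + c}
lemma convex_L (a b c : ℝ) : Convex ℝ (L a b c) := by
  intro x hx y hy s t hs ht hst
  simp only [L, Set.mem_setOf_eq] at *
  have h0 : (s • x + t • y) 0 = s * x 0 + t * y 0 := by simp
  have h1 : (s • x + t • y) 1 = s * x 1 + t * y 1 := by simp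
  rw [h0, h1]
  have hc : s * c + t * c = c := by rw [← add_mul, hst, one_mul]
  nlinarith [mul_nonneg hs hx, mul_nonneg ht hy, hc]
def S0 : Set Pt := L (-2) 2 0 ∩ L 5 (-9) 36 ∩ L (-3) 7 (-28)
def S1 : Set Pt := L 2 (-2) 0 ∩ L (-19) 0 171 ∩ L 17 2 (-133)
def S2 : Set Pt := L (-3) (-10) 91 ∩ L 3 (-2) 29 ∩ L 0 12 (-84)
def S3 : Set Pt := L (-1) (-12) 117 ∩ L 3 (-2) 29 ∩ L (-2) 14 (-108)
def S4 : Set Pt := L 14 9 (-36) ∩ L (-20) (-12) 60 ∩ L 6 3 (-12)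
def S5 : Set Pt := L (-14) (-9) 36 ∩ L 17 14 (-13) ∩ L (-3) (-5) 20
def CC : Fin 6 → Set Pt := fun i =>
  match i with
  | 0 => S0 | 1 => S1 | 2 => S2 | 3 => S3 | 4 => S4 | 5 => S5
def q0 : Pt := ![7, 7]
def q1 : Pt := ![9, 9]
def q2 : Pt := ![0, 4]
def q3 : Pt := ![9, (-10)]
def q4 : Pt := ![(-3), 10]
def q5 : Pt := ![(-5), 7]
lemma q0S0 : q0 ∈ S0 := by
  simp only [S0, S1, S2, S3, S4, S5, L, q0, q1, q2, q3, q4, q5, Set.mem_inter_iff, Set.mem_setOf_eq, Matrix.cons_val_zero, Matrix.cons_val_one, Matrix.head_cons]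
  norm_num
lemma q0S1 : q0 ∈ S1 := by
  simp only [S0, S1, S2, S3, S4, S5, L, q0, q1, q2, q3, q4, q5, Set.mem_inter_iff, Set.mem_setOf_eq, Matrix.cons_val_zero, Matrix.cons_val_one, Matrix.head_cons]
  norm_num
lemma q0S2 : q0 ∈ S2 := by
  simp only [S0, S1, S2, S3, S4, S5, L, q0, q1, q2, q3, q4, q5, Set.mem_inter_iff, Set.mem_setOf_eq, Matrix.cons_val_zero, Matrix.cons_val_one, Matrix.head_cons]
  norm_num
lemma q1S0 : q1 ∈ S0 := by
  simp only [S0, S1, S2, S3, S4, S5, L, q0, q1, q2, q3, q4, q5, Set.mem_inter_iff, Set.mem_setOf_eq, Matrix.cons_val_zero, Matrix.cons_val_one, Matrix.head_cons]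
  norm_num
lemma q1S1 : q1 ∈ S1 := by
  simp only [S0, S1, S2, S3, S4, S5, L, q0, q1, q2, q3, q4, q5, Set.mem_inter_iff, Set.mem_setOf_eq, Matrix.cons_val_zero, Matrix.cons_val_one, Matrix.head_cons]
  norm_num
lemma q1S3 : q1 ∈ S3 := by
  simp only [S0, S1, S2, S3, S4, S5, L, q0, q1, q2, q3, q4, q5, Set.mem_inter_iff, Set.mem_setOf_eq, Matrix.cons_val_zero, Matrix.cons_val_one, Matrix.head_cons]
  norm_num
lemma q2S0 : q2 ∈ S0 := by
  simp only [S0, S1, S2, S3, S4, S5, L, q0, q1, q2, q3, q4, q5, Set.mem_inter_iff, Set.mem_setOf_eq, Matrix.cons_val_zero, Matrix.cons_val_one, Matrix.head_cons]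
  norm_num
lemma q2S4 : q2 ∈ S4 := by
  simp only [S0, S1, S2, S3, S4, S5, L, q0, q1, q2, q3, q4, q5, Set.mem_inter_iff, Set.mem_setOf_eq, Matrix.cons_val_zero, Matrix.cons_val_one, Matrix.head_cons]
  norm_num
lemma q2S5 : q2 ∈ S5 := by
  simp only [S0, S1, S2, S3, S4, S5, L, q0, q1, q2, q3, q4, q5, Set.mem_inter_iff, Set.mem_setOf_eq, Matrix.cons_val_zero, Matrix.cons_val_one, Matrix.head_cons]
  norm_num
lemma q3S1 : q3 ∈ S1 := by
  simp only [S0, S1, S2, S3, S4, S5, L, q0, q1, q2, q3, q4, q5, Set.mem_inter_iff, Set.mem_setOf_eq, Matrix.cons_val_zero, Matrix.cons_val_one, Matrix.head_cons]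
  norm_num
lemma q3S4 : q3 ∈ S4 := by
  simp only [S0, S1, S2, S3, S4, S5, L, q0, q1, q2, q3, q4, q5, Set.mem_inter_iff, Set.mem_setOf_eq, Matrix.cons_val_zero, Matrix.cons_val_one, Matrix.head_cons]
  norm_num
lemma q3S5 : q3 ∈ S5 := by
  simp only [S0, S1, S2, S3, S4, S5, L, q0, q1, q2, q3, q4, q5, Set.mem_inter_iff, Set.mem_setOf_eq, Matrix.cons_val_zero, Matrix.cons_val_one, Matrix.head_cons]
  norm_num
lemma q4S2 : q4 ∈ S2 := by
  simp only [S0, S1, S2, S3, S4, S5, L, q0, q1, q2, q3, q4, q5, Set.mem_inter_iff, Set.mem_setOf_eq, Matrix.cons_val_zero, Matrix.cons_val_one, Matrix.head_cons]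
  norm_num
lemma q4S3 : q4 ∈ S3 := by
  simp only [S0, S1, S2, S3, S4, S5, L, q0, q1, q2, q3, q4, q5, Set.mem_inter_iff, Set.mem_setOf_eq, Matrix.cons_val_zero, Matrix.cons_val_one, Matrix.head_cons]
  norm_num
lemma q4S4 : q4 ∈ S4 := by
  simp only [S0, S1, S2, S3, S4, S5, L, q0, q1, q2, q3, q4, q5, Set.mem_inter_iff, Set.mem_setOf_eq, Matrix.cons_val_zero, Matrix.cons_val_one, Matrix.head_cons]
  norm_num
lemma q5S2 : q5 ∈ S2 := by
  simp only [S0, S1, S2, S3, S4, S5, L, q0, q1, q2, q3, q4, q5, Set.mem_inter_iff, Set.mem_setOf_eq, Matrix.cons_val_zero, Matrix.cons_val_one, Matrix.head_cons]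
  norm_num
lemma q5S3 : q5 ∈ S3 := by
  simp only [S0, S1, S2, S3, S4, S5, L, q0, q1, q2, q3, q4, q5, Set.mem_inter_iff, Set.mem_setOf_eq, Matrix.cons_val_zero, Matrix.cons_val_one, Matrix.head_cons]
  norm_num
lemma q5S5 : q5 ∈ S5 := by
  simp only [S0, S1, S2, S3, S4, S5, L, q0, q1, q2, q3, q4, q5, Set.mem_inter_iff, Set.mem_setOf_eq, Matrix.cons_val_zero, Matrix.cons_val_one, Matrix.head_cons]
  norm_num
lemma ne_0_1 : S0 ≠ S1 := by
  intro h
  have h2 : q2 ∉ S1 := by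
    simp only [S0, S1, S2, S3, S4, S5, L, q0, q1, q2, q3, q4, q5, Set.mem_inter_iff, Set.mem_setOf_eq, Matrix.cons_val_zero, Matrix.cons_val_one, Matrix.head_cons]
    norm_num
  exact h2 (h ▸ q2S0)
lemma ne_0_2 : S0 ≠ S2 := by
  intro h
  have h2 : q1 ∉ S2 := by
    simp only [S0, S1, S2, S3, S4, S5, L, q0, q1, q2, q3, q4, q5, Set.mem_inter_iff, Set.mem_setOf_eq, Matrix.cons_val_zero, Matrix.cons_val_one, Matrix.head_cons]
    norm_num
  exact h2 (h ▸ q1S0)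
lemma ne_0_3 : S0 ≠ S3 := by
  intro h
  have h2 : q0 ∉ S3 := by
    simp only [S0, S1, S2, S3, S4, S5, L, q0, q1, q2, q3, q4, q5, Set.mem_inter_iff, Set.mem_setOf_eq, Matrix.cons_val_zero, Matrix.cons_val_one, Matrix.head_cons]
    norm_num
  exact h2 (h ▸ q0S0)
lemma ne_0_4 : S0 ≠ S4 := by
  intro h
  have h2 : q0 ∉ S4 := by
    simp only [S0, S1, S2, S3, S4, S5, L, q0, q1, q2, q3, q4, q5, Set.mem_inter_iff, Set.mem_setOf_eq, Matrix.cons_val_zero, Matrix.cons_val_one, Matrix.head_cons]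
    norm_num
  exact h2 (h ▸ q0S0)
lemma ne_0_5 : S0 ≠ S5 := by
  intro h
  have h2 : q0 ∉ S5 := by
    simp only [S0, S1, S2, S3, S4, S5, L, q0, q1, q2, q3, q4, q5, Set.mem_inter_iff, Set.mem_setOf_eq, Matrix.cons_val_zero, Matrix.cons_val_one, Matrix.head_cons]
    norm_num
  exact h2 (h ▸ q0S0)
lemma ne_1_2 : S1 ≠ S2 := by
  intro h
  have h2 : q1 ∉ S2 := by
    simp only [S0, S1, S2, S3, S4, S5, L, q0, q1, q2, q3, q4, q5, Set.mem_inter_iff, Set.mem_setOf_eq, Matrix.cons_val_zero, Matrix.cons_val_one, Matrix.head_cons]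
    norm_num
  exact h2 (h ▸ q1S1)
lemma ne_1_3 : S1 ≠ S3 := by
  intro h
  have h2 : q0 ∉ S3 := by
    simp only [S0, S1, S2, S3, S4, S5, L, q0, q1, q2, q3, q4, q5, Set.mem_inter_iff, Set.mem_setOf_eq, Matrix.cons_val_zero, Matrix.cons_val_one, Matrix.head_cons]
    norm_num
  exact h2 (h ▸ q0S1)
lemma ne_1_4 : S1 ≠ S4 := by
  intro h
  have h2 : q0 ∉ S4 := by
    simp only [S0, S1, S2, S3, S4, S5, L, q0, q1, q2, q3, q4, q5, Set.mem_inter_iff, Set.mem_setOf_eq, Matrix.cons_val_zero, Matrix.cons_val_one, Matrix.head_cons]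
    norm_num
  exact h2 (h ▸ q0S1)
lemma ne_1_5 : S1 ≠ S5 := by
  intro h
  have h2 : q0 ∉ S5 := by
    simp only [S0, S1, S2, S3, S4, S5, L, q0, q1, q2, q3, q4, q5, Set.mem_inter_iff, Set.mem_setOf_eq, Matrix.cons_val_zero, Matrix.cons_val_one, Matrix.head_cons]
    norm_num
  exact h2 (h ▸ q0S1)
lemma ne_2_3 : S2 ≠ S3 := by
  intro h
  have h2 : q0 ∉ S3 := by
    simp only [S0, S1, S2, S3, S4, S5, L, q0, q1, q2, q3, q4, q5, Set.mem_inter_iff, Set.mem_setOf_eq, Matrix.cons_val_zero, Matrix.cons_val_one, Matrix.head_cons]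
    norm_num
  exact h2 (h ▸ q0S2)
lemma ne_2_4 : S2 ≠ S4 := by
  intro h
  have h2 : q0 ∉ S4 := by
    simp only [S0, S1, S2, S3, S4, S5, L, q0, q1, q2, q3, q4, q5, Set.mem_inter_iff, Set.mem_setOf_eq, Matrix.cons_val_zero, Matrix.cons_val_one, Matrix.head_cons]
    norm_num
  exact h2 (h ▸ q0S2)
lemma ne_2_5 : S2 ≠ S5 := by
  intro h
  have h2 : q0 ∉ S5 := by
    simp only [S0, S1, S2, S3, S4, S5, L, q0, q1, q2, q3, q4, q5, Set.mem_inter_iff, Set.mem_setOf_eq, Matrix.cons_val_zero, Matrix.cons_val_one, Matrix.head_cons]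
    norm_num
  exact h2 (h ▸ q0S2)
lemma ne_3_4 : S3 ≠ S4 := by
  intro h
  have h2 : q1 ∉ S4 := by
    simp only [S0, S1, S2, S3, S4, S5, L, q0, q1, q2, q3, q4, q5, Set.mem_inter_iff, Set.mem_setOf_eq, Matrix.cons_val_zero, Matrix.cons_val_one, Matrix.head_cons]
    norm_num
  exact h2 (h ▸ q1S3)
lemma ne_3_5 : S3 ≠ S5 := by
  intro h
  have h2 : q1 ∉ S5 := by
    simp only [S0, S1, S2, S3, S4, S5, L, q0, q1, q2, q3, q4, q5, Set.mem_inter_iff, Set.mem_setOf_eq, Matrix.cons_val_zero, Matrix.cons_val_one, Matrix.head_cons]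
    norm_num
  exact h2 (h ▸ q1S3)
lemma ne_4_5 : S4 ≠ S5 := by
  intro h
  have h2 : q4 ∉ S5 := by
    simp only [S0, S1, S2, S3, S4, S5, L, q0, q1, q2, q3, q4, q5, Set.mem_inter_iff, Set.mem_setOf_eq, Matrix.cons_val_zero, Matrix.cons_val_one, Matrix.head_cons]
    norm_num
  exact h2 (h ▸ q4S4)
def badTriples : List (Fin 6 × Fin 6 × Fin 6) := [(0,1,4), (0,1,5), (0,2,3), (0,2,4), (0,2,5), (0,3,4), (0,3,5), (1,2,3), (1,2,4), (1,2,5), (1,3,4), (1,3,5), (2,4,5), (3,4,5)]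
lemma badEmpty (a b c : Fin 6) (h : (a, b, c) ∈ badTriples) (x : Pt)
    (ha : x ∈ CC a) (hb : x ∈ CC b) (hc : x ∈ CC c) : False := by
  simp only [badTriples, List.mem_cons, List.not_mem_nil, or_false, Prod.mk.injEq] at h
  rcases h with ⟨rfl, rfl, rfl⟩|⟨rfl, rfl, rfl⟩|⟨rfl, rfl, rfl⟩|⟨rfl, rfl, rfl⟩|⟨rfl, rfl, rfl⟩|⟨rfl, rfl, rfl⟩|⟨rfl, rfl, rfl⟩|⟨rfl, rfl, rfl⟩|⟨rfl, rfl, rfl⟩|⟨rfl, rfl, rfl⟩|⟨rfl, rfl, rfl⟩|⟨rfl, rfl, rfl⟩|⟨rfl, rfl, rfl⟩|⟨rfl, rfl, rfl⟩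
  · rw [show CC 0 = S0 from rfl] at ha
    rw [show CC 1 = S1 from rfl] at hb
    rw [show CC 4 = S4 from rfl] at hc
    simp only [S0, S1, S4, L, Set.mem_inter_iff, Set.mem_setOf_eq] at ha hb hc
    linarith [ha.1.1, ha.1.2, ha.2, hb.1.1, hb.1.2, hb.2, hc.1.1, hc.1.2, hc.2]
  · rw [show CC 0 = S0 from rfl] at ha
    rw [show CC 1 = S1 from rfl] at hb
    rw [show CC 5 = S5 from rfl] at hc
    simp only [S0, S1, S5, L, Set.mem_inter_iff, Set.mem_setOf_eq] at ha hb hc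
    linarith [ha.1.1, ha.1.2, ha.2, hb.1.1, hb.1.2, hb.2, hc.1.1, hc.1.2, hc.2]
  · rw [show CC 0 = S0 from rfl] at ha
    rw [show CC 2 = S2 from rfl] at hb
    rw [show CC 3 = S3 from rfl] at hc
    simp only [S0, S2, S3, L, Set.mem_inter_iff, Set.mem_setOf_eq] at ha hb hc
    linarith [ha.1.1, ha.1.2, ha.2, hb.1.1, hb.1.2, hb.2, hc.1.1, hc.1.2, hc.2]
  · rw [show CC 0 = S0 from rfl] at ha
    rw [show CC 2 = S2 from rfl] at hb
    rw [show CC 4 = S4 from rfl] at hc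
    simp only [S0, S2, S4, L, Set.mem_inter_iff, Set.mem_setOf_eq] at ha hb hc
    linarith [ha.1.1, ha.1.2, ha.2, hb.1.1, hb.1.2, hb.2, hc.1.1, hc.1.2, hc.2]
  · rw [show CC 0 = S0 from rfl] at ha
    rw [show CC 2 = S2 from rfl] at hb
    rw [show CC 5 = S5 from rfl] at hc
    simp only [S0, S2, S5, L, Set.mem_inter_iff, Set.mem_setOf_eq] at ha hb hc
    linarith [ha.1.1, ha.1.2, ha.2, hb.1.1, hb.1.2, hb.2, hc.1.1, hc.1.2, hc.2]
  · rw [show CC 0 = S0 from rfl] at ha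
    rw [show CC 3 = S3 from rfl] at hb
    rw [show CC 4 = S4 from rfl] at hc
    simp only [S0, S3, S4, L, Set.mem_inter_iff, Set.mem_setOf_eq] at ha hb hc
    linarith [ha.1.1, ha.1.2, ha.2, hb.1.1, hb.1.2, hb.2, hc.1.1, hc.1.2, hc.2]
  · rw [show CC 0 = S0 from rfl] at ha
    rw [show CC 3 = S3 from rfl] at hb
    rw [show CC 5 = S5 from rfl] at hc
    simp only [S0, S3, S5, L, Set.mem_inter_iff, Set.mem_setOf_eq] at ha hb hc
    linarith [ha.1.1, ha.1.2, ha.2, hb.1.1, hb.1.2, hb.2, hc.1.1, hc.1.2, hc.2]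
  · rw [show CC 1 = S1 from rfl] at ha
    rw [show CC 2 = S2 from rfl] at hb
    rw [show CC 3 = S3 from rfl] at hc
    simp only [S1, S2, S3, L, Set.mem_inter_iff, Set.mem_setOf_eq] at ha hb hc
    linarith [ha.1.1, ha.1.2, ha.2, hb.1.1, hb.1.2, hb.2, hc.1.1, hc.1.2, hc.2]
  · rw [show CC 1 = S1 from rfl] at ha
    rw [show CC 2 = S2 from rfl] at hb
    rw [show CC 4 = S4 from rfl] at hc
    simp only [S1, S2, S4, L, Set.mem_inter_iff, Set.mem_setOf_eq] at ha hb hc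
    linarith [ha.1.1, ha.1.2, ha.2, hb.1.1, hb.1.2, hb.2, hc.1.1, hc.1.2, hc.2]
  · rw [show CC 1 = S1 from rfl] at ha
    rw [show CC 2 = S2 from rfl] at hb
    rw [show CC 5 = S5 from rfl] at hc
    simp only [S1, S2, S5, L, Set.mem_inter_iff, Set.mem_setOf_eq] at ha hb hc
    linarith [ha.1.1, ha.1.2, ha.2, hb.1.1, hb.1.2, hb.2, hc.1.1, hc.1.2, hc.2]
  · rw [show CC 1 = S1 from rfl] at ha
    rw [show CC 3 = S3 from rfl] at hb
    rw [show CC 4 = S4 from rfl] at hc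
    simp only [S1, S3, S4, L, Set.mem_inter_iff, Set.mem_setOf_eq] at ha hb hc
    linarith [ha.1.1, ha.1.2, ha.2, hb.1.1, hb.1.2, hb.2, hc.1.1, hc.1.2, hc.2]
  · rw [show CC 1 = S1 from rfl] at ha
    rw [show CC 3 = S3 from rfl] at hb
    rw [show CC 5 = S5 from rfl] at hc
    simp only [S1, S3, S5, L, Set.mem_inter_iff, Set.mem_setOf_eq] at ha hb hc
    linarith [ha.1.1, ha.1.2, ha.2, hb.1.1, hb.1.2, hb.2, hc.1.1, hc.1.2, hc.2]
  · rw [show CC 2 = S2 from rfl] at ha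
    rw [show CC 4 = S4 from rfl] at hb
    rw [show CC 5 = S5 from rfl] at hc
    simp only [S2, S4, S5, L, Set.mem_inter_iff, Set.mem_setOf_eq] at ha hb hc
    linarith [ha.1.1, ha.1.2, ha.2, hb.1.1, hb.1.2, hb.2, hc.1.1, hc.1.2, hc.2]
  · rw [show CC 3 = S3 from rfl] at ha
    rw [show CC 4 = S4 from rfl] at hb
    rw [show CC 5 = S5 from rfl] at hc
    simp only [S3, S4, S5, L, Set.mem_inter_iff, Set.mem_setOf_eq] at ha hb hc
    linarith [ha.1.1, ha.1.2, ha.2, hb.1.1, hb.1.2, hb.2, hc.1.1, hc.1.2, hc.2]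
lemma key : ∀ A : Finset (Fin 6), ∃ a b c : Fin 6, (a, b, c) ∈ badTriples ∧
    ((a ∈ A ∧ b ∈ A ∧ c ∈ A) ∨ (a ∉ A ∧ b ∉ A ∧ c ∉ A)) := by
  exact of_decide_eq_true (inst := @Fintype.decidableForallFintype (Finset (Fin 6)) (fun A => ∃ a b c : Fin 6, (a, b, c) ∈ badTriples ∧
      ((a ∈ A ∧ b ∈ A ∧ c ∈ A) ∨ (a ∉ A ∧ b ∉ A ∧ c ∉ A))) (fun _ => inferInstance) inferInstance) (by rfl)
lemma cover4 : ∀ P : Finset (Fin 6), P.card = 4 →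
    ({0,1,2} : Finset (Fin 6)) ⊆ P ∨ ({0,1,3} : Finset (Fin 6)) ⊆ P ∨
    ({0,4,5} : Finset (Fin 6)) ⊆ P ∨ ({1,4,5} : Finset (Fin 6)) ⊆ P ∨
    ({2,3,4} : Finset (Fin 6)) ⊆ P ∨ ({2,3,5} : Finset (Fin 6)) ⊆ P := by decide
lemma subset_pair (s : Finset Pt) (h : s.card ≤ 2) :
    ∃ u v : Pt, ∀ x ∈ s, x = u ∨ x = v := by
  obtain h0 | h1 | h2 : s.card = 0 ∨ s.card = 1 ∨ s.card = 2 := by omega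
  · rw [Finset.card_eq_zero] at h0
    subst h0
    exact ⟨0, 0, by simp⟩
  · rw [Finset.card_eq_one] at h1
    obtain ⟨a, rfl⟩ := h1
    exact ⟨a, a, fun x hx => Or.inl (Finset.mem_singleton.1 hx)⟩
  · rw [Finset.card_eq_two] at h2
    obtain ⟨a, b, -, rfl⟩ := h2
    exact ⟨a, b, fun x hx => by simpa using Finset.mem_insert.1 hx⟩
end C43
/-- There exist six nonempty convex sets in the plane with the `(4,3)` property whose
piercing number is at least `3`: no set of at most `2` points meets all of them.
Hence `C(4,3,2) ≥ 3`. -/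
theorem exists_six_convex_sets_43_property_piercing_ge_three :
    ∃ C : Fin 6 → Set (Fin 2 → ℝ),
      Function.Injective C ∧
      (∀ i, Convex ℝ (C i) ∧ (C i).Nonempty) ∧
      -- the (4,3) property: among every 4 of the sets, some 3 have a common point
      (∀ P : Finset (Fin 6), P.card = 4 →
        ∃ Q ⊆ P, Q.card = 3 ∧ (⋂ i ∈ Q, C i).Nonempty) ∧
      -- piercing number at least 3
      (∀ pts : Finset (Fin 2 → ℝ), (∀ i, ∃ x ∈ pts, x ∈ C i) → 3 ≤ pts.card) := by
  classical
  refine ⟨C43.CC, ?_, ?_, ?_, ?_⟩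
  · -- injectivity
    intro i j hij
    fin_cases i <;> fin_cases j <;>
      first
        | rfl
        | exact absurd hij C43.ne_0_1 | exact absurd hij C43.ne_0_2 | exact absurd hij C43.ne_0_3 | exact absurd hij C43.ne_0_4 | exact absurd hij C43.ne_0_5 | exact absurd hij C43.ne_1_2 | exact absurd hij C43.ne_1_3 | exact absurd hij C43.ne_1_4 | exact absurd hij C43.ne_1_5 | exact absurd hij C43.ne_2_3 | exact absurd hij C43.ne_2_4 | exact absurd hij C43.ne_2_5 | exact absurd hij C43.ne_3_4 | exact absurd hij C43.ne_3_5 | exact absurd hij C43.ne_4_5 | exact absurd hij C43.ne_0_1.symm | exact absurd hij C43.ne_0_2.symm | exact absurd hij C43.ne_0_3.symm | exact absurd hij C43.ne_0_4.symm | exact absurd hij C43.ne_0_5.symm | exact absurd hij C43.ne_1_2.symm | exact absurd hij C43.ne_1_3.symm | exact absurd hij C43.ne_1_4.symm | exact absurd hij C43.ne_1_5.symm | exact absurd hij C43.ne_2_3.symm | exact absurd hij C43.ne_2_4.symm | exact absurd hij C43.ne_2_5.symm | exact absurd hij C43.ne_3_4.symm | exact absurd hij C43.ne_3_5.symm | exact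 absurd hij C43.ne_4_5.symm
  · -- convex and nonempty
    intro i
    fin_cases i
    · exact ⟨((C43.convex_L _ _ _).inter (C43.convex_L _ _ _)).inter (C43.convex_L _ _ _), C43.q0, C43.q0S0⟩
    · exact ⟨((C43.convex_L _ _ _).inter (C43.convex_L _ _ _)).inter (C43.convex_L _ _ _), C43.q0, C43.q0S1⟩
    · exact ⟨((C43.convex_L _ _ _).inter (C43.convex_L _ _ _)).inter (C43.convex_L _ _ _), C43.q0, C43.q0S2⟩
    · exact ⟨((C43.convex_L _ _ _).inter (C43.convex_L _ _ _)).inter (C43.convex_L _ _ _), C43.q1, C43.q1S3⟩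
    · exact ⟨((C43.convex_L _ _ _).inter (C43.convex_L _ _ _)).inter (C43.convex_L _ _ _), C43.q2, C43.q2S4⟩
    · exact ⟨((C43.convex_L _ _ _).inter (C43.convex_L _ _ _)).inter (C43.convex_L _ _ _), C43.q2, C43.q2S5⟩
  · -- (4,3) property
    intro P hP
    rcases C43.cover4 P hP with h | h | h | h | h | h
    · refine ⟨{0,1,2}, h, by decide, C43.q0, ?_⟩
      simp only [Set.mem_iInter]
      intro i hi
      fin_cases hi
      · exact C43.q0S0
      · exact C43.q0S1
      · exact C43.q0S2
    · refine ⟨{0,1,3}, h, by decide, C43.q1, ?_⟩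
      simp only [Set.mem_iInter]
      intro i hi
      fin_cases hi
      · exact C43.q1S0
      · exact C43.q1S1
      · exact C43.q1S3
    · refine ⟨{0,4,5}, h, by decide, C43.q2, ?_⟩
      simp only [Set.mem_iInter]
      intro i hi
      fin_cases hi
      · exact C43.q2S0
      · exact C43.q2S4
      · exact C43.q2S5
    · refine ⟨{1,4,5}, h, by decide, C43.q3, ?_⟩
      simp only [Set.mem_iInter]
      intro i hi
      fin_cases hi
      · exact C43.q3S1
      · exact C43.q3S4
      · exact C43.q3S5
    · refine ⟨{2,3,4}, h, by decide, C43.q4, ?_⟩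
      simp only [Set.mem_iInter]
      intro i hi
      fin_cases hi
      · exact C43.q4S2
      · exact C43.q4S3
      · exact C43.q4S4
    · refine ⟨{2,3,5}, h, by decide, C43.q5, ?_⟩
      simp only [Set.mem_iInter]
      intro i hi
      fin_cases hi
      · exact C43.q5S2
      · exact C43.q5S3
      · exact C43.q5S5
  · -- piercing number ≥ 3
    intro pts hp
    by_contra hlt
    push_neg at hlt
    have hle : pts.card ≤ 2 := by omega
    obtain ⟨u, v, huv⟩ := C43.subset_pair pts hle
    choose g hg1 hg2 using hp
    set A : Finset (Fin 6) := Finset.univ.filter (fun i => g i = u) with hA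
    obtain ⟨a, b, c, hbad, hcase⟩ := C43.key A
    rcases hcase with ⟨ha, hb, hc⟩ | ⟨ha, hb, hc⟩
    · simp only [hA, Finset.mem_filter, Finset.mem_univ, true_and] at ha hb hc
      exact C43.badEmpty a b c hbad u (ha ▸ hg2 a) (hb ▸ hg2 b) (hc ▸ hg2 c)
    · simp only [hA, Finset.mem_filter, Finset.mem_univ, true_and] at ha hb hc
      have hva : g a = v := (huv _ (hg1 a)).resolve_left ha
      have hvb : g b = v := (huv _ (hg1 b)).resolve_left hb
      have hvc : g c = v := (huv _ (hg1 c)).resolve_left hc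
      exact C43.badEmpty a b c hbad v (hva ▸ hg2 a) (hvb ▸ hg2 b) (hvc ▸ hg2 c)
end

section
/- (Optimality of Amenta's theorem.) For every d ≥ 1 and k ≥ 1 there exist a finite family F of compact convex sets in ℝ^d and an (F,k)-family G consisting of k(d+1) nonempty sets such that every k(d+1) − 1 of the sets in G have a common point, but the intersection of all sets in G is empty; hence the Helly number of G equals k(d+1). -/
open Finset Set

section AmentaAux

variable (d : ℕ)

/-- Translated simplex: all coordinates at least `2j`, coordinate sum at most `2jd+1`. -/
def Spx (j : ℕ) : Set (Fin d → ℝ) :=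
  {x | (∀ c, 2*(j:ℝ) ≤ x c) ∧ ∑ c, x c ≤ 2*(j:ℝ)*d + 1}

/-- The facet condition indexed by `i : Fin (d+1)`. -/
def Fcond (j : ℕ) (i : Fin (d+1)) : Set (Fin d → ℝ) :=
  if h : (i : ℕ) < d then {x | x ⟨i, h⟩ = 2*(j:ℝ)} else {x | ∑ c, x c = 2*(j:ℝ)*d + 1}

/-- Intersection of a set of facets of the simplex. -/
def FaceI (j : ℕ) (T : Finset (Fin (d+1))) : Set (Fin d → ℝ) :=
  Spx d j ∩ ⋂ i ∈ T, Fcond d j i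

/-- The vertex of simplex `j` opposite to facet `i`. -/
def Vtx (j : ℕ) (i : Fin (d+1)) : Fin d → ℝ :=
  fun c => 2*(j:ℝ) + if (c : ℕ) = (i : ℕ) then 1 else 0

lemma sum_Vtx (j : ℕ) (i : Fin (d+1)) :
    ∑ c, Vtx d j i c = 2*(j:ℝ)*d + (if (i:ℕ) < d then 1 else 0) := by
  unfold Vtx
  rw [Finset.sum_add_distrib, Finset.sum_const]
  congr 1
  · simp [mul_comm]
  · by_cases h : (i:ℕ) < d
    · rw [if_pos h, Finset.sum_eq_single_of_mem ⟨i, h⟩ (Finset.mem_univ _)]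
      · simp
      · intro c _ hc
        rw [if_neg]
        intro hcv
        exact hc (Fin.ext hcv)
    · rw [if_neg h, Finset.sum_eq_zero]
      intro c _
      rw [if_neg]
      intro hcv
      exact h (hcv ▸ c.isLt)

lemma vtx_mem_Spx (j : ℕ) (i : Fin (d+1)) : Vtx d j i ∈ Spx d j := by
  constructor
  · intro c
    unfold Vtx
    split <;> norm_num
  · rw [sum_Vtx]
    split <;> norm_num

lemma vtx_mem_Fcond (j : ℕ) {i i' : Fin (d+1)} (h : i' ≠ i) : Vtx d j i ∈ Fcond d j i' := by
  unfold Fcond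
  split
  · rename_i hlt
    show Vtx d j i _ = _
    unfold Vtx
    rw [if_neg, add_zero]
    intro hcv
    exact h (Fin.ext hcv)
  · rename_i hlt
    show ∑ c, Vtx d j i c = _
    rw [sum_Vtx, if_pos]
    have : (i':ℕ) = d := by omega
    have : (i:ℕ) ≠ d := fun hv => h (Fin.ext (by omega))
    omega

lemma vtx_notMem_Fcond (j : ℕ) (i : Fin (d+1)) : Vtx d j i ∉ Fcond d j i := by
  unfold Fcond
  split
  · rename_i hlt
    show ¬ (Vtx d j i _ = _)
    unfold Vtx
    rw [if_pos rfl]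
    norm_num
  · rename_i hlt
    show ¬ (∑ c, Vtx d j i c = _)
    rw [sum_Vtx, if_neg (by omega)]
    norm_num

lemma spx_disjoint (hd : 1 ≤ d) {j m : ℕ} (h : j ≠ m) : Disjoint (Spx d j) (Spx d m) := by
  rw [Set.disjoint_left]
  rintro x ⟨hx1, hx2⟩ ⟨hy1, hy2⟩
  have hsumj : 2*(j:ℝ)*d ≤ ∑ c, x c := by
    calc 2*(j:ℝ)*d = ∑ _c : Fin d, 2*(j:ℝ) := by rw [Finset.sum_const]; simp [mul_comm]
    _ ≤ ∑ c, x c := Finset.sum_le_sum fun c _ => hx1 c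
  have hsumm : 2*(m:ℝ)*d ≤ ∑ c, x c := by
    calc 2*(m:ℝ)*d = ∑ _c : Fin d, 2*(m:ℝ) := by rw [Finset.sum_const]; simp [mul_comm]
    _ ≤ ∑ c, x c := Finset.sum_le_sum fun c _ => hy1 c
  have hd' : (1:ℝ) ≤ d := by exact_mod_cast hd
  rcases lt_or_gt_of_ne h with hlt | hlt
  · have : (j:ℝ) + 1 ≤ m := by exact_mod_cast hlt
    nlinarith
  · have : (m:ℝ) + 1 ≤ j := by exact_mod_cast hlt
    nlinarith

/-- FaceI is contained in the simplex. -/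
lemma faceI_subset (j : ℕ) (T : Finset (Fin (d+1))) : FaceI d j T ⊆ Spx d j :=
  Set.inter_subset_left

lemma spx_subset_pi (j : ℕ) :
    Spx d j ⊆ Set.pi Set.univ (fun _ : Fin d => Set.Icc (0:ℝ) (2*(j:ℝ)*d + 1)) := by
  rintro x ⟨hx1, hx2⟩ c _
  have h0 : ∀ c', (0:ℝ) ≤ x c' := fun c' => le_trans (by positivity) (hx1 c')
  constructor
  · exact h0 c
  · exact le_trans (Finset.single_le_sum (fun c' _ => h0 c') (Finset.mem_univ c)) hx2

lemma isLinearMap_eval (c : Fin d) : IsLinearMap ℝ (fun x : Fin d → ℝ => x c) :=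
  ⟨fun _ _ => rfl, fun _ _ => rfl⟩

lemma isLinearMap_sum : IsLinearMap ℝ (fun x : Fin d → ℝ => ∑ c, x c) :=
  ⟨fun x y => Finset.sum_add_distrib, fun r x => by simp [Finset.mul_sum]⟩

lemma convex_Spx (j : ℕ) : Convex ℝ (Spx d j) := by
  have : Spx d j = (⋂ c, {x : Fin d → ℝ | 2*(j:ℝ) ≤ x c}) ∩
      {x : Fin d → ℝ | ∑ c, x c ≤ 2*(j:ℝ)*d + 1} := by
    ext x; simp [Spx, Set.mem_iInter]
  rw [this]
  exact (convex_iInter fun c => convex_halfSpace_ge (isLinearMap_eval d c) _).inter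
    (convex_halfSpace_le (isLinearMap_sum d) _)

lemma convex_Fcond (j : ℕ) (i : Fin (d+1)) : Convex ℝ (Fcond d j i) := by
  unfold Fcond
  split
  · exact convex_hyperplane (isLinearMap_eval d _) _
  · exact convex_hyperplane (isLinearMap_sum d) _

lemma convex_FaceI (j : ℕ) (T : Finset (Fin (d+1))) : Convex ℝ (FaceI d j T) :=
  (convex_Spx d j).inter (convex_iInter₂ fun i _ => convex_Fcond d j i)

lemma isClosed_Spx (j : ℕ) : IsClosed (Spx d j) := by
  have : Spx d j = (⋂ c, {x : Fin d → ℝ | 2*(j:ℝ) ≤ x c}) ∩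
      {x : Fin d → ℝ | ∑ c, x c ≤ 2*(j:ℝ)*d + 1} := by
    ext x; simp [Spx, Set.mem_iInter]
  rw [this]
  exact (isClosed_iInter fun c => isClosed_le continuous_const (continuous_apply c)).inter
    (isClosed_le (by continuity) continuous_const)

lemma isClosed_Fcond (j : ℕ) (i : Fin (d+1)) : IsClosed (Fcond d j i) := by
  unfold Fcond
  split
  · exact isClosed_eq (continuous_apply _) continuous_const
  · exact isClosed_eq (by continuity) continuous_const

lemma isClosed_FaceI (j : ℕ) (T : Finset (Fin (d+1))) : IsClosed (FaceI d j T) :=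
  (isClosed_Spx d j).inter (isClosed_biInter fun i _ => isClosed_Fcond d j i)

lemma isCompact_FaceI (j : ℕ) (T : Finset (Fin (d+1))) : IsCompact (FaceI d j T) := by
  refine IsCompact.of_isClosed_subset ?_ (isClosed_FaceI d j T)
    ((faceI_subset d j T).trans (spx_subset_pi d j))
  exact isCompact_univ_pi fun _ => isCompact_Icc

/-- The members of the family `G`: everything except the open part of one simplex off
one of its facets. -/
def BSet (k : ℕ) (j : Fin k) (i : Fin (d+1)) : Set (Fin d → ℝ) :=
  (⋃ m : Fin k, ⋃ _ : m ≠ j, Spx d m) ∪ (Spx d j ∩ Fcond d j i)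

lemma vtx_mem_BSet_of_ne (k : ℕ) {p q : Fin k × Fin (d+1)} (hpq : p ≠ q) :
    Vtx d p.1 p.2 ∈ BSet d k q.1 q.2 := by
  by_cases hj : p.1 = q.1
  · have hi : p.2 ≠ q.2 := fun hv => hpq (Prod.ext hj hv)
    right
    exact ⟨hj ▸ vtx_mem_Spx d p.1 p.2, hj ▸ vtx_mem_Fcond d p.1 (Ne.symm hi)⟩
  · left
    exact Set.mem_iUnion.2 ⟨p.1, Set.mem_iUnion.2 ⟨hj, vtx_mem_Spx d p.1 p.2⟩⟩

lemma vtx_notMem_BSet (hd : 1 ≤ d) (k : ℕ) (p : Fin k × Fin (d+1)) :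
    Vtx d p.1 p.2 ∉ BSet d k p.1 p.2 := by
  rintro (hmem | ⟨_, hf⟩)
  · obtain ⟨m, hm⟩ := Set.mem_iUnion.1 hmem
    obtain ⟨hmne, hx⟩ := Set.mem_iUnion.1 hm
    have hne : (m:ℕ) ≠ (p.1:ℕ) := fun hv => hmne (Fin.ext hv)
    exact Set.disjoint_left.1 (spx_disjoint d hd hne) hx (vtx_mem_Spx d p.1 p.2)
  · exact vtx_notMem_Fcond d p.1 p.2 hf

lemma bset_subset_union (k : ℕ) (j : Fin k) (i : Fin (d+1)) :
    BSet d k j i ⊆ ⋃ m : Fin k, Spx d m := by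
  rintro x (hx | hx)
  · obtain ⟨m, hm⟩ := Set.mem_iUnion.1 hx
    obtain ⟨-, hx⟩ := Set.mem_iUnion.1 hm
    exact Set.mem_iUnion.2 ⟨m, hx⟩
  · exact Set.mem_iUnion.2 ⟨j, hx.1⟩

/-- Key identity: an intersection of B-sets is a disjoint union of faces. -/
lemma iInter_BSet (hd : 1 ≤ d) (k : ℕ) (T : Finset (Fin k × Fin (d+1))) (hT : T.Nonempty) :
    ⋂ p ∈ T, BSet d k p.1 p.2 =
      ⋃ m : Fin k, FaceI d m (Finset.univ.filter fun i => (m, i) ∈ T) := by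
  ext x
  simp only [Set.mem_iInter, Set.mem_iUnion]
  constructor
  · intro hx
    obtain ⟨p0, hp0⟩ := hT
    have hx0 := hx p0 hp0
    obtain ⟨m, hm⟩ := Set.mem_iUnion.1 (bset_subset_union d k p0.1 p0.2 hx0)
    refine ⟨m, hm, ?_⟩
    rw [Set.mem_iInter₂]
    intro i hi
    rw [Finset.mem_filter] at hi
    rcases hx (m, i) hi.2 with hmem | hmem
    · obtain ⟨m', hm'⟩ := Set.mem_iUnion.1 hmem
      obtain ⟨hne, hx'⟩ := Set.mem_iUnion.1 hm'
      have hnev : (m':ℕ) ≠ (m:ℕ) := fun hv => hne (Fin.ext hv)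
      exact absurd hm (Set.disjoint_left.1 (spx_disjoint d hd hnev) hx')
    · exact hmem.2
  · rintro ⟨m, hm, hface⟩ p hp
    rw [Set.mem_iInter₂] at hface
    by_cases hj : p.1 = m
    · right
      subst hj
      refine ⟨hm, hface p.2 (Finset.mem_filter.2 ⟨Finset.mem_univ _, ?_⟩)⟩
      simpa using hp
    · left
      exact Set.mem_iUnion.2 ⟨m, Set.mem_iUnion.2 ⟨fun h => hj h.symm, hm⟩⟩

end AmentaAux


/-- `G` is an `(F, k)`-family: the intersection of every nonempty subfamily of `G` is the
union of at most `k` pairwise disjoint members of `F`. -/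
def IsFkFamily {X : Type*} (F : Finset (Set X)) (k : ℕ) (G : Finset (Set X)) : Prop :=
  ∀ G' ⊆ G, G'.Nonempty →
    ∃ F' ⊆ F, F'.card ≤ k ∧
      (∀ A ∈ F', ∀ B ∈ F', A ≠ B → Disjoint A B) ∧
      ⋂₀ (G' : Set (Set X)) = ⋃₀ (F' : Set (Set X))

/-- **Optimality of Amenta's theorem.** For every `d ≥ 1` and `k ≥ 1` there are a finite
family `F` of compact convex sets in `ℝ^d` and an `(F, k)`-family `G` of `k * (d + 1)`
nonempty sets such that every `k * (d + 1) - 1` of the sets in `G` have a common point,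
but the intersection of all the sets in `G` is empty.  Hence the Helly number of `G`
equals `k * (d + 1)`. -/
theorem amenta_optimal (d k : ℕ) (hd : 1 ≤ d) (hk : 1 ≤ k) :
    ∃ F : Finset (Set (Fin d → ℝ)),
      (∀ A ∈ F, IsCompact A ∧ Convex ℝ A) ∧
      ∃ G : Finset (Set (Fin d → ℝ)),
        IsFkFamily F k G ∧
        G.card = k * (d + 1) ∧
        (∀ A ∈ G, A.Nonempty) ∧
        (∀ H ⊆ G, H.card = k * (d + 1) - 1 →
          (⋂₀ (H : Set (Set (Fin d → ℝ)))).Nonempty) ∧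
        ⋂₀ (G : Set (Set (Fin d → ℝ))) = ∅ := by
  classical
  haveI : NeZero k := ⟨by omega⟩
  -- injectivity of the B-sets
  have hBinj : Function.Injective (fun p : Fin k × Fin (d+1) => BSet d k p.1 p.2) := by
    intro p q hpq
    by_contra hne
    have h1 := vtx_mem_BSet_of_ne d k hne
    simp only at hpq
    rw [← hpq] at h1
    exact vtx_notMem_BSet d hd k p h1
  refine ⟨(Finset.univ : Finset (Fin k × Finset (Fin (d+1)))).image
      (fun p => FaceI d p.1 p.2), ?_,
    (Finset.univ : Finset (Fin k × Fin (d+1))).image (fun p => BSet d k p.1 p.2),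
    ?_, ?_, ?_, ?_, ?_⟩
  · -- compact and convex
    intro A hA
    obtain ⟨p, -, rfl⟩ := Finset.mem_image.1 hA
    exact ⟨isCompact_FaceI d p.1 p.2, convex_FaceI d p.1 p.2⟩
  · -- IsFkFamily
    intro G' hsub hne
    set T : Finset (Fin k × Fin (d+1)) :=
      Finset.univ.filter (fun p => BSet d k p.1 p.2 ∈ G') with hT
    have hTne : T.Nonempty := by
      obtain ⟨C, hC⟩ := hne
      obtain ⟨p, -, rfl⟩ := Finset.mem_image.1 (hsub hC)
      exact ⟨p, Finset.mem_filter.2 ⟨Finset.mem_univ _, hC⟩⟩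
    have hInter : ⋂₀ (G' : Set (Set (Fin d → ℝ))) = ⋂ p ∈ T, BSet d k p.1 p.2 := by
      apply Set.Subset.antisymm
      · intro x hx
        simp only [Set.mem_iInter]
        intro p hp
        exact hx _ (Finset.mem_coe.2 (Finset.mem_filter.1 hp).2)
      · intro x hx C hC
        obtain ⟨p, -, rfl⟩ := Finset.mem_image.1 (hsub hC)
        exact Set.mem_iInter₂.1 hx p (Finset.mem_filter.2 ⟨Finset.mem_univ _, hC⟩)
    refine ⟨(Finset.univ : Finset (Fin k)).image
        (fun m : Fin k => FaceI d (m:ℕ) (Finset.univ.filter fun i => (m, i) ∈ T)),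
        ?_, ?_, ?_, ?_⟩
    · intro A hA
      obtain ⟨m, -, rfl⟩ := Finset.mem_image.1 hA
      exact Finset.mem_image.2 ⟨(m, Finset.univ.filter fun i => (m, i) ∈ T),
        Finset.mem_univ _, rfl⟩
    · exact Finset.card_image_le.trans (by simp)
    · intro A hA B hB hAB
      obtain ⟨m, -, rfl⟩ := Finset.mem_image.1 hA
      obtain ⟨m', -, rfl⟩ := Finset.mem_image.1 hB
      have hmm : m ≠ m' := fun h => hAB (by rw [h])
      have hmne : (m:ℕ) ≠ (m':ℕ) := fun hv => hmm (Fin.ext hv)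
      exact (spx_disjoint d hd hmne).mono (faceI_subset d _ _) (faceI_subset d _ _)
    · rw [hInter, iInter_BSet d hd k T hTne, Finset.coe_image, Set.sUnion_image]
      ext x
      simp
  · -- cardinality
    rw [Finset.card_image_of_injective _ hBinj, Finset.card_univ]
    simp [mul_comm]
  · -- nonempty members
    intro A hA
    obtain ⟨p, -, rfl⟩ := Finset.mem_image.1 hA
    haveI : Nontrivial (Fin (d+1)) := ⟨⟨0, Fin.last d, by
      intro h
      have := congrArg Fin.val h
      simp [Fin.last] at this
      omega⟩⟩
    obtain ⟨i', hi'⟩ := exists_ne p.2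
    exact ⟨Vtx d p.1 i', vtx_mem_BSet_of_ne d k (p := (p.1, i')) (q := p)
      (fun h => hi' (congrArg Prod.snd h))⟩
  · -- every (k(d+1)-1)-subfamily has a common point
    intro H hH hcard
    have hGc : ((Finset.univ : Finset (Fin k × Fin (d+1))).image
        (fun p => BSet d k p.1 p.2)).card = k * (d+1) := by
      rw [Finset.card_image_of_injective _ hBinj, Finset.card_univ]
      simp [mul_comm]
    have h1 : 1 ≤ k * (d+1) := Nat.one_le_iff_ne_zero.2 (by positivity)
    have hlt : ¬ ((Finset.univ : Finset (Fin k × Fin (d+1))).image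
        (fun p => BSet d k p.1 p.2)) ⊆ H := by
      intro hsub
      have := Finset.card_le_card hsub
      omega
    obtain ⟨A, hAG, hAH⟩ := Finset.not_subset.1 hlt
    obtain ⟨p0, -, rfl⟩ := Finset.mem_image.1 hAG
    refine ⟨Vtx d p0.1 p0.2, ?_⟩
    intro C hC
    obtain ⟨q, -, rfl⟩ := Finset.mem_image.1 (hH hC)
    have hq : p0 ≠ q := by
      intro h
      exact hAH (by rw [h]; exact hC)
    exact vtx_mem_BSet_of_ne d k hq
  · -- intersection of all is empty
    rw [Set.eq_empty_iff_forall_notMem]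
    intro x hx
    have hx' : x ∈ ⋂ p ∈ (Finset.univ : Finset (Fin k × Fin (d+1))), BSet d k p.1 p.2 := by
      simp only [Set.mem_iInter]
      intro p _
      exact hx _ (Finset.mem_coe.2 (Finset.mem_image.2 ⟨p, Finset.mem_univ _, rfl⟩))
    rw [iInter_BSet d hd k Finset.univ Finset.univ_nonempty] at hx'
    obtain ⟨m, hm⟩ := Set.mem_iUnion.1 hx'
    obtain ⟨hspx, hfc⟩ := hm
    rw [Set.mem_iInter₂] at hfc
    have hall : ∀ c : Fin d, x c = 2*(m:ℝ) := by
      intro c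
      have h2 := hfc (Fin.castSucc c) (by simp)
      rw [Fcond, dif_pos (by simpa using c.isLt)] at h2
      simp only [Set.mem_setOf_eq, Fin.eta] at h2
      exact h2
    have hlast := hfc (Fin.last d) (by simp)
    rw [Fcond, dif_neg (by simp)] at hlast
    simp only [Set.mem_setOf_eq] at hlast
    have hsum : ∑ c, x c = 2*(m:ℝ)*d := by
      rw [Finset.sum_congr rfl fun c _ => hall c, Finset.sum_const]
      simp [mul_comm]
    rw [hsum] at hlast
    linarith
end

section
/- Every finite abstract simplicial complex K on n vertices is (n−1)-representable: there exists a family (C_v)_{v ∈ V} of convex sets in ℝ^{n−1}, indexed by the vertex set V of K, such that for every nonempty finite subset σ ⊆ V the intersection ⋂_{v∈σ} C_v is nonempty if and only if σ is a face of K. -/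
open Finset

section Aux
variable {V : Type*} [Fintype V] [DecidableEq V] {m : ℕ} (v₀ : V) (e : {v : V // v ≠ v₀} ≃ Fin m)

noncomputable def coordAux (v : V) (y : Fin m → ℝ) : ℝ :=
  if h : v = v₀ then 1 - ∑ i, y i else y (e ⟨v, h⟩)

noncomputable def bAux (σ : Finset V) : Fin m → ℝ :=
  fun i => if (e.symm i : V) ∈ σ then (σ.card : ℝ)⁻¹ else 0

lemma coordAux_bAux (σ : Finset V) (hσ : σ.Nonempty) (v : V) :
    coordAux v₀ e v (bAux v₀ e σ) = if v ∈ σ then (σ.card : ℝ)⁻¹ else 0 := by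
  have hc : (0:ℝ) < σ.card := by exact_mod_cast hσ.card_pos
  by_cases hv : v = v₀
  · have hsum : ∑ i : Fin m, (if (e.symm i : V) ∈ σ then (σ.card : ℝ)⁻¹ else 0)
        = ((σ.erase v₀).card : ℝ) * (σ.card : ℝ)⁻¹ := by
      rw [Equiv.sum_comp e.symm (fun u : {v : V // v ≠ v₀} =>
        if (u : V) ∈ σ then (σ.card : ℝ)⁻¹ else 0)]
      rw [← Finset.sum_filter]
      rw [Finset.sum_const, nsmul_eq_mul]
      congr 2
      refine Finset.card_bij (fun (u : {x : V // x ≠ v₀}) _ => (u : V)) ?_ ?_ ?_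
      · intro u hu
        simp only [mem_filter, mem_univ, true_and] at hu
        exact Finset.mem_erase.2 ⟨u.2, hu⟩
      · intro a ha b hb hab
        exact Subtype.ext hab
      · intro x hx
        rw [Finset.mem_erase] at hx
        exact ⟨⟨x, hx.1⟩, by simp [hx.2], rfl⟩
    rw [hv] at *
    simp only [coordAux, bAux, dif_pos rfl, hsum]
    by_cases h0 : v₀ ∈ σ
    · rw [if_pos h0, Finset.card_erase_of_mem h0]
      have h1 : (1:ℕ) ≤ σ.card := hσ.card_pos
      push_cast [h1]
      field_simp
      ring
    · rw [if_neg h0, Finset.erase_eq_of_notMem h0]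
      field_simp
      ring
  · simp only [coordAux, bAux, dif_neg hv, Equiv.symm_apply_apply]

lemma coordAux_centerMass {ι : Type*} (t : Finset ι) (w : ι → ℝ) (z : ι → Fin m → ℝ)
    (hw : ∑ i ∈ t, w i = 1) (v : V) :
    coordAux v₀ e v (t.centerMass w z) = ∑ i ∈ t, w i * coordAux v₀ e v (z i) := by
  rw [Finset.centerMass_eq_of_sum_1 _ _ hw]
  unfold coordAux
  split_ifs with h
  · simp only [Finset.sum_apply, Pi.smul_apply, smul_eq_mul, mul_sub, mul_one,
      Finset.sum_sub_distrib, hw, Finset.mul_sum]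
    rw [Finset.sum_comm]
  · simp [Finset.sum_apply]
end Aux

/-- Every finite abstract simplicial complex `K` on `n` vertices is `(n-1)`-representable:
there is a family of convex sets in `ℝ^(n-1)`, indexed by the vertices of `K`, such that a
nonempty finite set of vertices has a nonempty intersection of the corresponding convex
sets if and only if it is a face of `K`. -/
theorem complex_representable_in_dim_card_sub_one
    {V : Type*} [Fintype V] (K : Finset (Finset V))
    (hK : ∀ σ ∈ K, σ.Nonempty ∧ ∀ τ ⊆ σ, τ.Nonempty → τ ∈ K)
    (hvert : ∀ v : V, {v} ∈ K) :
    ∃ C : V → Set (Fin (Fintype.card V - 1) → ℝ),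
      (∀ v, Convex ℝ (C v)) ∧
      ∀ σ : Finset V, σ.Nonempty → (σ ∈ K ↔ (⋂ v ∈ σ, C v).Nonempty) := by
  classical
  rcases isEmpty_or_nonempty V with h | h
  · refine ⟨fun _ => ∅, fun v => convex_empty, fun σ hσ => ?_⟩
    obtain ⟨v, -⟩ := hσ
    exact (IsEmpty.false v).elim
  · obtain ⟨v₀⟩ := h
    have hcard : Fintype.card {v : V // v ≠ v₀} = Fintype.card V - 1 := by
      simp [Fintype.card_subtype_compl (· = v₀)]
    let e : {v : V // v ≠ v₀} ≃ Fin (Fintype.card V - 1) := Fintype.equivFinOfCardEq hcard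
    set b := bAux v₀ e with hb
    set coord := coordAux v₀ e with hcoord
    set C : V → Set (Fin (Fintype.card V - 1) → ℝ) :=
      fun v => convexHull ℝ (b '' {σ | σ ∈ K ∧ v ∈ σ}) with hC
    -- representation lemma
    have hrep : ∀ v x, x ∈ C v → ∃ (ι : Type) (t : Finset ι) (w : ι → ℝ) (σf : ι → Finset V),
        (∀ i ∈ t, 0 ≤ w i) ∧ (∑ i ∈ t, w i = 1) ∧ (∀ i ∈ t, σf i ∈ K ∧ v ∈ σf i) ∧
        x = t.centerMass w (fun i => b (σf i)) := by
      intro v x hx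
      change x ∈ convexHull ℝ (b '' {σ | σ ∈ K ∧ v ∈ σ}) at hx
      rw [_root_.convexHull_eq] at hx
      obtain ⟨ι, t, w, z, hw0, hw1, hz, hcm⟩ := hx
      refine ⟨ι, t, w, fun i => if hi : ∃ σ, (σ ∈ K ∧ v ∈ σ) ∧ b σ = z i then hi.choose else ∅,
        hw0, hw1, ?_, ?_⟩
      · intro i hi
        obtain ⟨σ, hσ, hbσ⟩ := hz i hi
        have hex : ∃ σ, (σ ∈ K ∧ v ∈ σ) ∧ b σ = z i := ⟨σ, hσ, hbσ⟩
        simp only [dif_pos hex]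
        exact hex.choose_spec.1
      · rw [← hcm, Finset.centerMass_eq_of_sum_1 _ _ hw1, Finset.centerMass_eq_of_sum_1 _ _ hw1]
        refine Finset.sum_congr rfl fun i hi => ?_
        obtain ⟨σ, hσ, hbσ⟩ := hz i hi
        have hex : ∃ σ, (σ ∈ K ∧ v ∈ σ) ∧ b σ = z i := ⟨σ, hσ, hbσ⟩
        simp only [dif_pos hex, hex.choose_spec.2]
    -- max-coordinate lemma
    have hle : ∀ v x, x ∈ C v → ∀ u, coord u x ≤ coord v x := by
      intro v x hx u
      obtain ⟨ι, t, w, σf, hw0, hw1, hσK, hxeq⟩ := hrep v x hx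
      rw [hxeq, hcoord, coordAux_centerMass v₀ e t w _ hw1, coordAux_centerMass v₀ e t w _ hw1]
      refine Finset.sum_le_sum fun i hi => ?_
      have hne : (σf i).Nonempty := (hK _ (hσK i hi).1).1
      have hcpos : (0:ℝ) < ((σf i).card : ℝ)⁻¹ := by
        rw [inv_pos]; exact_mod_cast hne.card_pos
      rw [coordAux_bAux v₀ e _ hne, coordAux_bAux v₀ e _ hne, if_pos (hσK i hi).2]
      refine mul_le_mul_of_nonneg_left ?_ (hw0 i hi)
      split_ifs <;> [exact le_refl _; exact le_of_lt hcpos]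
    refine ⟨C, fun v => convex_convexHull ℝ _, fun τ hτ => ?_⟩
    constructor
    · intro hτK
      refine ⟨b τ, Set.mem_iInter₂.2 fun v hv => ?_⟩
      exact subset_convexHull ℝ _ ⟨τ, ⟨hτK, hv⟩, rfl⟩
    · rintro ⟨x, hx⟩
      have hxC : ∀ v ∈ τ, x ∈ C v := fun v hv => Set.mem_iInter₂.1 hx v hv
      obtain ⟨v, hv⟩ := hτ
      obtain ⟨ι, t, w, σf, hw0, hw1, hσK, hxeq⟩ := hrep v x (hxC v hv)
      have hi₀ : ∃ i ∈ t, 0 < w i := by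
        by_contra hcon
        push_neg at hcon
        have : ∑ i ∈ t, w i = 0 :=
          Finset.sum_eq_zero fun i hi => le_antisymm (hcon i hi) (hw0 i hi)
        rw [hw1] at this; norm_num at this
      obtain ⟨i₀, hi₀t, hi₀pos⟩ := hi₀
      have key : τ ⊆ σf i₀ := by
        intro u hu
        have heq : coord u x = coord v x :=
          le_antisymm (hle v x (hxC v hv) u) (hle u x (hxC u hu) v)
        have hsum0 : ∑ i ∈ t, w i * (coord v (b (σf i)) - coord u (b (σf i))) = 0 := by
          simp only [mul_sub, Finset.sum_sub_distrib]
          rw [← coordAux_centerMass v₀ e t w _ hw1, ← coordAux_centerMass v₀ e t w _ hw1,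
            ← hcoord, ← hxeq, heq, sub_self]
        have hnn : ∀ i ∈ t, 0 ≤ w i * (coord v (b (σf i)) - coord u (b (σf i))) := by
          intro i hi
          have hne : (σf i).Nonempty := (hK _ (hσK i hi).1).1
          refine mul_nonneg (hw0 i hi) (sub_nonneg.2 ?_)
          rw [hcoord, coordAux_bAux v₀ e _ hne, coordAux_bAux v₀ e _ hne, if_pos (hσK i hi).2]
          have hcpos : (0:ℝ) < ((σf i).card : ℝ)⁻¹ := by
            rw [inv_pos]; exact_mod_cast hne.card_pos
          split_ifs <;> [exact le_refl _; exact le_of_lt hcpos]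
        have hz := (Finset.sum_eq_zero_iff_of_nonneg hnn).1 hsum0 i₀ hi₀t
        have hdiff : coord v (b (σf i₀)) - coord u (b (σf i₀)) = 0 := by
          rcases mul_eq_zero.1 hz with h | h
          · exact absurd h (ne_of_gt hi₀pos)
          · exact h
        have hne : (σf i₀).Nonempty := (hK _ (hσK i₀ hi₀t).1).1
        rw [hcoord, coordAux_bAux v₀ e _ hne, coordAux_bAux v₀ e _ hne,
          if_pos (hσK i₀ hi₀t).2, sub_eq_zero] at hdiff
        by_contra hu'
        rw [if_neg hu'] at hdiff
        have : (0:ℝ) < ((σf i₀).card : ℝ)⁻¹ := by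
          rw [inv_pos]; exact_mod_cast hne.card_pos
        rw [← hdiff] at this
        exact lt_irrefl _ this
      exact (hK _ (hσK i₀ hi₀t).1).2 τ key ⟨v, hv⟩
end

section
/- (Wegner, Perel'man.) Let K be a finite abstract simplicial complex of dimension d. Then K is (2d+1)-representable: there exists a family (C_v)_{v ∈ V} of convex sets in ℝ^{2d+1}, indexed by the vertex set V of K, such that for every nonempty finite subset σ ⊆ V the intersection ⋂_{v∈σ} C_v is nonempty if and only if σ is a face of K. -/
open Polynomial

namespace WegnerAux

noncomputable section
open scoped Classical

variable {V : Type*}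

/-- The minimal `t`-value on a finset (junk value `0` for the empty set). -/
def minT (t : V → ℝ) (σ : Finset V) : ℝ :=
  if h : (σ.image t).Nonempty then (σ.image t).min' h else 0

lemma minT_mem (t : V → ℝ) {σ : Finset V} (h : σ.Nonempty) :
    ∃ x ∈ σ, t x = minT t σ := by
  have him : (σ.image t).Nonempty := h.image t
  rw [minT, dif_pos him]
  obtain ⟨x, hx, hx'⟩ := Finset.mem_image.mp ((σ.image t).min'_mem him)
  exact ⟨x, hx, hx'⟩

lemma minT_le (t : V → ℝ) {σ : Finset V} {x : V} (hx : x ∈ σ) :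
    minT t σ ≤ t x := by
  have him : (σ.image t).Nonempty := ⟨t x, Finset.mem_image_of_mem t hx⟩
  rw [minT, dif_pos him]
  exact (σ.image t).min'_le (t x) (Finset.mem_image_of_mem t hx)

/-- The polynomial attached to a face. -/
def facePoly (t : V → ℝ) (d : ℕ) (σ : Finset V) : Polynomial ℝ :=
  (∏ x ∈ σ, (X - C (t x)) ^ (if t x = minT t σ then 1 else 2)) *
    X ^ (2 * (d + 1 - σ.card))

lemma facePoly_monic (t : V → ℝ) (d : ℕ) (σ : Finset V) :
    (facePoly t d σ).Monic := by
  refine Monic.mul ?_ (monic_X_pow _)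
  exact monic_prod_of_monic _ _ fun x _ => (monic_X_sub_C _).pow _

lemma facePoly_natDegree (t : V → ℝ) (tinj : Function.Injective t) (d : ℕ)
    {σ : Finset V} (hne : σ.Nonempty) (hcard : σ.card ≤ d + 1) :
    (facePoly t d σ).natDegree = 2 * d + 1 := by
  obtain ⟨x₀, hx₀σ, hx₀⟩ := minT_mem t hne
  have hfil : σ.filter (fun x => t x = minT t σ) = {x₀} := by
    ext y
    simp only [Finset.mem_filter, Finset.mem_singleton]
    constructor
    · rintro ⟨-, hy⟩
      exact tinj (hy.trans hx₀.symm)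
    · rintro rfl
      exact ⟨hx₀σ, hx₀⟩
  have hsum : (∑ x ∈ σ, (if t x = minT t σ then 1 else 2)) = 2 * σ.card - 1 := by
    rw [← Finset.sum_filter_add_sum_filter_not σ (fun x => t x = minT t σ)]
    have h1 : (∑ x ∈ σ.filter (fun x => t x = minT t σ),
        (if t x = minT t σ then 1 else 2)) = 1 := by
      rw [hfil]
      simp [hx₀]
    have hc : (σ.filter (fun x => ¬ t x = minT t σ)).card = σ.card - 1 := by
      have := Finset.card_filter_add_card_filter_not
        (s := σ) (p := fun x => t x = minT t σ)
      rw [hfil] at this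
      simp only [Finset.card_singleton] at this
      omega
    have h2 : (∑ x ∈ σ.filter (fun x => ¬ t x = minT t σ),
        (if t x = minT t σ then 1 else 2)) = 2 * (σ.card - 1) := by
      have hall : ∀ x ∈ σ.filter (fun x => ¬ t x = minT t σ),
          (if t x = minT t σ then 1 else 2) = 2 :=
        fun x hx => if_neg (Finset.mem_filter.mp hx).2
      rw [Finset.sum_congr rfl hall, Finset.sum_const, hc, smul_eq_mul]
      ring
    rw [h1, h2]
    have : 1 ≤ σ.card := Finset.card_pos.mpr hne
    omega
  have hdeg : (facePoly t d σ).natDegree =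
      (∑ x ∈ σ, (if t x = minT t σ then 1 else 2)) + 2 * (d + 1 - σ.card) := by
    rw [facePoly]
    rw [Monic.natDegree_mul
      (monic_prod_of_monic _ _ fun x _ => (monic_X_sub_C _).pow _) (monic_X_pow _)]
    rw [natDegree_X_pow]
    congr 1
    rw [natDegree_prod_of_monic _ _ fun x _ => (monic_X_sub_C _).pow _]
    refine Finset.sum_congr rfl fun x _ => ?_
    rw [natDegree_pow, natDegree_X_sub_C, mul_one]
  rw [hdeg, hsum]
  have : 1 ≤ σ.card := Finset.card_pos.mpr hne
  omega

lemma facePoly_eval (t : V → ℝ) (d : ℕ) (σ : Finset V) (s : ℝ) :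
    (facePoly t d σ).eval s =
      (∏ x ∈ σ, (s - t x) ^ (if t x = minT t σ then 1 else 2)) *
        s ^ (2 * (d + 1 - σ.card)) := by
  rw [facePoly, eval_mul, eval_pow, eval_X, eval_prod]
  congr 1
  refine Finset.prod_congr rfl fun x _ => ?_
  rw [eval_pow, eval_sub, eval_X, eval_C]

lemma facePoly_eval_zero_of_mem (t : V → ℝ) (d : ℕ) {σ : Finset V} {v : V}
    (hv : v ∈ σ) : (facePoly t d σ).eval (t v) = 0 := by
  rw [facePoly_eval]
  apply mul_eq_zero_of_left
  refine Finset.prod_eq_zero hv ?_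
  rw [sub_self]
  exact zero_pow (by split <;> omega)

lemma facePoly_eval_nonneg (t : V → ℝ) (d : ℕ) {σ : Finset V} {s : ℝ}
    (hs : minT t σ ≤ s) : 0 ≤ (facePoly t d σ).eval s := by
  rw [facePoly_eval]
  refine mul_nonneg (Finset.prod_nonneg fun x hx => ?_) ?_
  · by_cases h : t x = minT t σ
    · rw [if_pos h, pow_one, h]
      linarith
    · rw [if_neg h]
      exact sq_nonneg _
  · rw [pow_mul]
    exact pow_nonneg (sq_nonneg _) _

lemma mem_of_facePoly_eval_zero (t : V → ℝ) (tinj : Function.Injective t)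
    (d : ℕ) {σ : Finset V} {w : V} (hw : t w ≠ 0)
    (hz : (facePoly t d σ).eval (t w) = 0) : w ∈ σ := by
  rw [facePoly_eval] at hz
  rcases mul_eq_zero.mp hz with h | h
  · obtain ⟨x, hxσ, hx⟩ := Finset.prod_eq_zero_iff.mp h
    have hsub : t w - t x = 0 := by
      by_contra hne
      exact (pow_ne_zero _ hne) hx
    have : t w = t x := by linarith
    rw [tinj this]
    exact hxσ
  · exact absurd h (pow_ne_zero _ hw)

/-- Coefficient vector of the face polynomial. -/
def qpt (t : V → ℝ) (d : ℕ) (σ : Finset V) : Fin (2 * d + 1) → ℝ :=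
  fun i => (facePoly t d σ).coeff i

/-- Affine evaluation map on "monic coefficient vectors". -/
def evalPt (d : ℕ) (s : ℝ) (y : Fin (2 * d + 1) → ℝ) : ℝ :=
  s ^ (2 * d + 1) + ∑ i : Fin (2 * d + 1), y i * s ^ (i : ℕ)

lemma evalPt_qpt (t : V → ℝ) (tinj : Function.Injective t) (d : ℕ)
    {σ : Finset V} (hne : σ.Nonempty) (hcard : σ.card ≤ d + 1) (s : ℝ) :
    evalPt d s (qpt t d σ) = (facePoly t d σ).eval s := by
  have hdeg := facePoly_natDegree t tinj d hne hcard
  have hmon := facePoly_monic t d σ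
  rw [Polynomial.eval_eq_sum_range, hdeg, Finset.sum_range_succ]
  have hc : (facePoly t d σ).coeff (2 * d + 1) = 1 := by
    rw [← hdeg]
    exact hmon.coeff_natDegree
  rw [hc, one_mul, evalPt]
  simp only [qpt]
  rw [Fin.sum_univ_eq_sum_range (fun i => (facePoly t d σ).coeff i * s ^ i)]
  ring

lemma evalPt_sum (d : ℕ) (s : ℝ) (Y : Finset (Fin (2 * d + 1) → ℝ))
    (wt : (Fin (2 * d + 1) → ℝ) → ℝ) (h1 : ∑ y ∈ Y, wt y = 1) :
    evalPt d s (∑ y ∈ Y, wt y • y) = ∑ y ∈ Y, wt y * evalPt d s y := by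
  have happ : ∀ i : Fin (2 * d + 1),
      (∑ y ∈ Y, wt y • y) i = ∑ y ∈ Y, wt y * y i := by
    intro i
    rw [Finset.sum_apply]
    simp [smul_eq_mul]
  simp only [evalPt]
  have hrhs : ∑ y ∈ Y, wt y * (s ^ (2 * d + 1) + ∑ i : Fin (2 * d + 1), y i * s ^ (i : ℕ))
      = s ^ (2 * d + 1) + ∑ y ∈ Y, ∑ i : Fin (2 * d + 1), wt y * (y i * s ^ (i : ℕ)) := by
    simp_rw [mul_add, Finset.sum_add_distrib, ← Finset.sum_mul, h1, one_mul, Finset.mul_sum]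
  rw [hrhs]
  congr 1
  simp_rw [happ, Finset.sum_mul]
  rw [Finset.sum_comm]
  exact Finset.sum_congr rfl fun y _ => Finset.sum_congr rfl fun i _ => by ring

end
end WegnerAux

open WegnerAux

/-- **Wegner, Perel'man.** Every finite abstract simplicial complex `K` of dimension `d`
is `(2d+1)`-representable: there is a family of convex sets in `ℝ^(2d+1)`, indexed by the
vertices of `K`, such that a nonempty finite set of vertices has a nonempty intersection
of the corresponding convex sets if and only if it is a face of `K`. -/
theorem dim_d_complex_representable_in_dim_two_d_add_one
    {V : Type*} (d : ℕ) (K : Finset (Finset V))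
    (hK : ∀ σ ∈ K, σ.Nonempty ∧ ∀ τ ⊆ σ, τ.Nonempty → τ ∈ K)
    (hvert : ∀ v : V, {v} ∈ K)
    -- `K` has dimension `d`
    (hdim : ∀ σ ∈ K, σ.card ≤ d + 1) (hdim' : ∃ σ ∈ K, σ.card = d + 1) :
    ∃ C : V → Set (Fin (2 * d + 1) → ℝ),
      (∀ v, Convex ℝ (C v)) ∧
      ∀ σ : Finset V, σ.Nonempty → (σ ∈ K ↔ (⋂ v ∈ σ, C v).Nonempty) := by
  classical
  haveI : Fintype V := Fintype.ofInjective
    (fun v => (⟨{v}, hvert v⟩ : {σ // σ ∈ K}))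
    (fun a b h => Finset.singleton_injective (congrArg Subtype.val h))
  set e := Fintype.equivFin V with he
  set t : V → ℝ := fun v => ((e v : ℕ) : ℝ) + 1 with ht
  have tinj : Function.Injective t := by
    intro a b hab
    apply e.injective
    apply Fin.ext
    have : (((e a : ℕ) : ℝ)) = ((e b : ℕ) : ℝ) := by
      simp only [ht] at hab
      linarith
    exact_mod_cast this
  have tpos : ∀ v, (0 : ℝ) < t v := by
    intro v
    simp only [ht]
    positivity
  refine ⟨fun v => convexHull ℝ ↑((K.filter (fun σ => v ∈ σ)).image (qpt t d)),
    fun v => convex_convexHull ℝ _, ?_⟩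
  intro τ hτ
  constructor
  · -- faces have nonempty intersections
    intro hτK
    refine ⟨qpt t d τ, Set.mem_iInter₂.mpr fun v hv => ?_⟩
    refine subset_convexHull ℝ _ ?_
    exact Finset.mem_coe.mpr
      (Finset.mem_image_of_mem _ (Finset.mem_filter.mpr ⟨hτK, hv⟩))
  · -- nonempty intersections come from faces
    rintro ⟨p, hp⟩
    have hpC : ∀ v ∈ τ,
        p ∈ convexHull ℝ ↑((K.filter (fun σ => v ∈ σ)).image (qpt t d)) :=
      Set.mem_iInter₂.mp hp
    obtain ⟨w₁, hw₁τ, hw₁min⟩ := Finset.exists_min_image τ t hτ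
    -- p vanishes under evalPt at every t u, u ∈ τ
    have hpzero : ∀ u ∈ τ, evalPt d (t u) p = 0 := by
      intro u hu
      have h2 := hpC u hu
      rw [Finset.convexHull_eq] at h2
      obtain ⟨wt', h0', h1', hcm'⟩ := h2
      rw [Finset.centerMass_eq_of_sum_1 _ _ h1'] at hcm'
      try simp only [id_eq] at hcm'
      rw [← hcm', evalPt_sum _ _ _ _ h1']
      refine Finset.sum_eq_zero fun y hy => ?_
      obtain ⟨ρ, hρ, rfl⟩ := Finset.mem_image.mp hy
      have hρK : ρ ∈ K := (Finset.mem_filter.mp hρ).1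
      have huρ : u ∈ ρ := (Finset.mem_filter.mp hρ).2
      rw [evalPt_qpt t tinj d (hK ρ hρK).1 (hdim ρ hρK),
        facePoly_eval_zero_of_mem t d huρ, mul_zero]
    -- weights for p as a mixture over faces containing w₁
    have hpY := hpC w₁ hw₁τ
    set Y := (K.filter (fun σ => w₁ ∈ σ)).image (qpt t d) with hY
    rw [Finset.convexHull_eq] at hpY
    obtain ⟨wt, hwt0, hwt1, hcm⟩ := hpY
    rw [Finset.centerMass_eq_of_sum_1 _ _ hwt1] at hcm
    try simp only [id_eq] at hcm
    -- each term of the mixture evaluates nonnegatively at every u ∈ τ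
    have hEy_nonneg : ∀ u ∈ τ, ∀ y ∈ Y, 0 ≤ evalPt d (t u) y := by
      intro u hu y hy
      obtain ⟨ρ, hρ, rfl⟩ := Finset.mem_image.mp hy
      have hρK : ρ ∈ K := (Finset.mem_filter.mp hρ).1
      have hwρ : w₁ ∈ ρ := (Finset.mem_filter.mp hρ).2
      rw [evalPt_qpt t tinj d (hK ρ hρK).1 (hdim ρ hρK)]
      refine facePoly_eval_nonneg t d ?_
      calc minT t ρ ≤ t w₁ := minT_le t hwρ
        _ ≤ t u := hw₁min u hu
    -- all terms of the mixture vanish at every u ∈ τ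
    have hterms : ∀ u ∈ τ, ∀ y ∈ Y, wt y * evalPt d (t u) y = 0 := by
      intro u hu
      have hsum : ∑ y ∈ Y, wt y * evalPt d (t u) y = 0 := by
        rw [← evalPt_sum _ _ _ _ hwt1, hcm]
        exact hpzero u hu
      intro y hy
      exact (Finset.sum_eq_zero_iff_of_nonneg fun z hz =>
        mul_nonneg (hwt0 z hz) (hEy_nonneg u hu z hz)).mp hsum y hy
    -- some weight is nonzero
    have hex : ∃ y ∈ Y, wt y ≠ 0 := by
      by_contra h
      push_neg at h
      rw [Finset.sum_eq_zero h] at hwt1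
      norm_num at hwt1
    obtain ⟨y₀, hy₀Y, hy₀⟩ := hex
    obtain ⟨ρ₀, hρ₀, hy₀eq⟩ := Finset.mem_image.mp hy₀Y
    have hρ₀K : ρ₀ ∈ K := (Finset.mem_filter.mp hρ₀).1
    have hsub : τ ⊆ ρ₀ := by
      intro u hu
      have h0 := hterms u hu y₀ hy₀Y
      have hE : evalPt d (t u) y₀ = 0 := by
        rcases mul_eq_zero.mp h0 with h | h
        · exact absurd h hy₀
        · exact h
      rw [← hy₀eq, evalPt_qpt t tinj d (hK ρ₀ hρ₀K).1 (hdim ρ₀ hρ₀K)] at hE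
      exact mem_of_facePoly_eval_zero t tinj d (ne_of_gt (tpos u)) hE
    exact (hK ρ₀ hρ₀K).2 τ hsub hτ
end

section
/- (Matoušek–Tancer.) Let K be a finite abstract simplicial complex such that the nerve N(K) of the family of all nonempty faces of K is n-representable. Then K embeds linearly in ℝ^n: there exists an injective map f from the vertex set of K to ℝ^n such that for every face α of K the points f(α) are affinely independent, and for all faces α, β of K the convex hulls satisfy conv(f(α)) ∩ conv(f(β)) = conv(f(α ∩ β)). -/
/-- **Matoušek–Tancer.** If the nerve of the family of all (nonempty) faces of a finite
abstract simplicial complex `K` is `n`-representable, then `K` embeds linearly in `ℝ^n`: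
there is an injective map `f` from the vertex set of `K` to `ℝ^n` mapping each face to an
affinely independent set, such that the convex hulls of the images of any two faces
intersect exactly in the convex hull of the image of their intersection. -/
theorem nerve_representable_implies_linear_embedding
    {V : Type*} [DecidableEq V] (n : ℕ) (K : Finset (Finset V))
    (hK : ∀ σ ∈ K, σ.Nonempty ∧ ∀ τ ⊆ σ, τ.Nonempty → τ ∈ K)
    (hvert : ∀ v : V, {v} ∈ K)
    -- the nerve of the family of all nonempty faces of `K` is `n`-representable:
    (C : {α // α ∈ K} → Set (Fin n → ℝ))
    (hC : ∀ α, Convex ℝ (C α))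
    (hnerve : ∀ S : Finset {α // α ∈ K}, S.Nonempty →
      ((⋂ α ∈ S, ((α : Finset V) : Set V)).Nonempty ↔ (⋂ α ∈ S, C α).Nonempty)) :
    ∃ f : V → (Fin n → ℝ), Function.Injective f ∧
      (∀ α ∈ K, AffineIndependent ℝ (fun v : {x // x ∈ α} => f v)) ∧
      (∀ α ∈ K, ∀ β ∈ K,
        convexHull ℝ (f '' ↑α) ∩ convexHull ℝ (f '' ↑β) =
          convexHull ℝ (f '' ↑(α ∩ β))) := by
  classical
  -- Step 1: choose, for every vertex `v`, a point in the intersection of all `C σ` with `v ∈ σ`.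
  have hpt : ∀ v : V, ∃ p : Fin n → ℝ, ∀ (σ : Finset V) (hσ : σ ∈ K), v ∈ σ → p ∈ C ⟨σ, hσ⟩ := by
    intro v
    set S : Finset {α // α ∈ K} := Finset.univ.filter (fun α => v ∈ (α : Finset V)) with hS
    have hSmem : ∀ (σ : Finset V) (hσ : σ ∈ K), v ∈ σ → (⟨σ, hσ⟩ : {α // α ∈ K}) ∈ S := by
      intro σ hσ hv
      simp [hS, hv]
    have hSne : S.Nonempty := ⟨⟨{v}, hvert v⟩, hSmem _ _ (Finset.mem_singleton_self v)⟩
    have h1 : (⋂ α ∈ S, ((α : Finset V) : Set V)).Nonempty := by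
      refine ⟨v, ?_⟩
      simp only [Set.mem_iInter]
      intro α hα
      have : v ∈ (α : Finset V) := by
        simpa [hS] using hα
      exact this
    obtain ⟨p, hp⟩ := (hnerve S hSne).1 h1
    exact ⟨p, fun σ hσ hv => Set.mem_iInter₂.1 hp ⟨σ, hσ⟩ (hSmem σ hσ hv)⟩
  choose x hx using hpt
  -- Step 2: convex hulls of points of a face lie in the corresponding convex set.
  have hhull : ∀ (σ : Finset V) (hσ : σ ∈ K), convexHull ℝ (x '' ↑σ) ⊆ C ⟨σ, hσ⟩ := by
    intro σ hσ
    apply convexHull_min _ (hC _)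
    rintro _ ⟨v, hv, rfl⟩
    exact hx v σ hσ hv
  -- Step 3: disjoint faces have disjoint convex sets.
  have hdisj : ∀ (σ τ : Finset V) (hσ : σ ∈ K) (hτ : τ ∈ K), σ ∩ τ = ∅ →
      ∀ p, p ∈ C ⟨σ, hσ⟩ → p ∈ C ⟨τ, hτ⟩ → False := by
    intro σ τ hσ hτ hst p hpσ hpτ
    set S : Finset {α // α ∈ K} := {⟨σ, hσ⟩, ⟨τ, hτ⟩} with hS
    have hSne : S.Nonempty := ⟨⟨σ, hσ⟩, by simp [hS]⟩
    have h2 : (⋂ α ∈ S, C α).Nonempty := by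
      refine ⟨p, ?_⟩
      simp only [Set.mem_iInter]
      intro α hα
      rcases Finset.mem_insert.1 hα with h | h
      · rw [h]; exact hpσ
      · rw [Finset.mem_singleton.1 h]; exact hpτ
    obtain ⟨u, hu⟩ := (hnerve S hSne).2 h2
    have huσ : u ∈ σ := by
      have := Set.mem_iInter₂.1 hu ⟨σ, hσ⟩ (by simp [hS])
      simpa using this
    have huτ : u ∈ τ := by
      have := Set.mem_iInter₂.1 hu ⟨τ, hτ⟩ (by simp [hS])
      simpa using this
    have : u ∈ σ ∩ τ := Finset.mem_inter.2 ⟨huσ, huτ⟩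
    rw [hst] at this
    exact absurd this (Finset.notMem_empty u)
  -- Step 4 (Radon-type key lemma): any affine dependence whose positive part is supported in a
  -- face `α` and negative part in a face `β` is trivial.
  have key : ∀ (α β : Finset V), α ∈ K → β ∈ K → ∀ c : V → ℝ,
      (∀ v, 0 < c v → v ∈ α) → (∀ v, c v < 0 → v ∈ β) →
      ∑ v ∈ α ∪ β, c v = 0 → ∑ v ∈ α ∪ β, c v • x v = 0 → ∀ v, c v = 0 := by
    intro α β hα hβ c hcpos hcneg hsum hvec v
    by_contra hv
    set P : Finset V := (α ∪ β).filter (fun w => 0 < c w) with hP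
    set N : Finset V := (α ∪ β).filter (fun w => c w < 0) with hN
    have hPsub : ∀ w ∈ P, w ∈ α := fun w hw => hcpos w (Finset.mem_filter.1 hw).2
    have hNsub : ∀ w ∈ N, w ∈ β := fun w hw => hcneg w (Finset.mem_filter.1 hw).2
    have hPNdisj : Disjoint P N := by
      rw [Finset.disjoint_left]
      intro w hwP hwN
      exact absurd ((Finset.mem_filter.1 hwN).2) (not_lt.2 (le_of_lt (Finset.mem_filter.1 hwP).2))
    have hPNsub : P ∪ N ⊆ α ∪ β := by
      intro w hw
      rcases Finset.mem_union.1 hw with h | h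
      · exact (Finset.mem_filter.1 h).1
      · exact (Finset.mem_filter.1 h).1
    have hzero : ∀ w ∈ α ∪ β, w ∉ P ∪ N → c w = 0 := by
      intro w hw hw'
      rcases lt_trichotomy (c w) 0 with h | h | h
      · exact absurd (Finset.mem_union_right _ (Finset.mem_filter.2 ⟨hw, h⟩)) hw'
      · exact h
      · exact absurd (Finset.mem_union_left _ (Finset.mem_filter.2 ⟨hw, h⟩)) hw'
    have hsum' : ∑ w ∈ P, c w + ∑ w ∈ N, c w = 0 := by
      rw [← Finset.sum_union hPNdisj, Finset.sum_subset hPNsub hzero, hsum]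
    have hvec' : ∑ w ∈ P, c w • x w + ∑ w ∈ N, c w • x w = 0 := by
      rw [← Finset.sum_union hPNdisj,
        Finset.sum_subset hPNsub (fun w hw hw' => by rw [hzero w hw hw', zero_smul]), hvec]
    -- both `P` and `N` are nonempty
    have hPne : P.Nonempty := by
      rcases lt_or_gt_of_ne hv with hlt | hgt
      · have hNne : N.Nonempty :=
          ⟨v, Finset.mem_filter.2 ⟨Finset.mem_union_right _ (hcneg v hlt), hlt⟩⟩
        have h1 : ∑ w ∈ N, c w < 0 :=
          Finset.sum_neg (fun w hw => (Finset.mem_filter.1 hw).2) hNne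
        by_contra hPe
        rw [Finset.not_nonempty_iff_eq_empty] at hPe
        rw [hPe, Finset.sum_empty, zero_add] at hsum'
        linarith
      · exact ⟨v, Finset.mem_filter.2 ⟨Finset.mem_union_left _ (hcpos v hgt), hgt⟩⟩
    have htpos : 0 < ∑ w ∈ P, c w :=
      Finset.sum_pos (fun w hw => (Finset.mem_filter.1 hw).2) hPne
    have hNne : N.Nonempty := by
      by_contra hNe
      rw [Finset.not_nonempty_iff_eq_empty] at hNe
      rw [hNe, Finset.sum_empty, add_zero] at hsum'
      linarith
    -- the Radon point
    set y : Fin n → ℝ := P.centerMass c x with hy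
    have hyP : y ∈ convexHull ℝ (x '' ↑P) :=
      P.centerMass_mem_convexHull (fun w hw => le_of_lt (Finset.mem_filter.1 hw).2) htpos
        (fun w hw => Set.mem_image_of_mem x hw)
    have hNsumpos : 0 < ∑ w ∈ N, (-c) w := by
      have : ∑ w ∈ N, (-c) w = -∑ w ∈ N, c w := by simp
      rw [this]
      linarith
    have hyN : y ∈ convexHull ℝ (x '' ↑N) := by
      have heq : y = N.centerMass (fun w => -c w) x := by
        rw [hy, Finset.centerMass, Finset.centerMass]
        have h1 : ∑ w ∈ N, (fun w => -c w) w = ∑ w ∈ P, c w := by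
          have : ∑ w ∈ N, -c w = -∑ w ∈ N, c w := by simp
          rw [this]; linarith
        have h2 : ∑ w ∈ N, (fun w => -c w) w • x w = ∑ w ∈ P, c w • x w := by
          have : ∑ w ∈ N, (-c w) • x w = -∑ w ∈ N, c w • x w := by
            simp [neg_smul]
          rw [this]
          have := hvec'
          abel_nf
          linear_combination (norm := module) -hvec'
        rw [h1, h2]
      rw [heq]
      exact N.centerMass_mem_convexHull (fun w hw => by simp [le_of_lt (Finset.mem_filter.1 hw).2])
        hNsumpos (fun w hw => Set.mem_image_of_mem x hw)
    -- `P` and `N` are disjoint faces; contradiction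
    have hPK : P ∈ K := (hK α hα).2 P hPsub hPne
    have hNK : N ∈ K := (hK β hβ).2 N hNsub hNne
    exact hdisj P N hPK hNK (Finset.disjoint_iff_inter_eq_empty.1 hPNdisj) y
      (hhull P hPK hyP) (hhull N hNK hyN)
  -- Injectivity
  have hinj : Function.Injective x := by
    intro v w hvw
    by_contra hne
    have hint : ({v} : Finset V) ∩ {w} = ∅ := by
      simp [Finset.singleton_inter_of_notMem, hne]
    exact hdisj {v} {w} (hvert v) (hvert w) hint (x v)
      (hx v {v} (hvert v) (Finset.mem_singleton_self v))
      (hvw ▸ hx w {w} (hvert w) (Finset.mem_singleton_self w))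
  refine ⟨x, hinj, ?_, ?_⟩
  -- Affine independence of faces
  · intro α hα
    rw [affineIndependent_iff]
    intro s w hw0 hw1 e he
    set c : V → ℝ := fun v => if h : v ∈ α then (if ⟨v, h⟩ ∈ s then w ⟨v, h⟩ else 0) else 0 with hc
    have hsupp : ∀ v, c v ≠ 0 → v ∈ α := by
      intro v hv
      by_contra h
      exact hv (by simp [hc, h])
    have hcattach : ∀ i : {y // y ∈ α}, c ↑i = if i ∈ s then w i else 0 := by
      intro i
      simp only [hc, dif_pos i.2]
    have hcsum : ∑ v ∈ α ∪ α, c v = 0 := by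
      rw [Finset.union_self, ← Finset.sum_attach α c]
      calc ∑ i ∈ α.attach, c ↑i = ∑ i ∈ α.attach, (if i ∈ s then w i else 0) := by
            exact Finset.sum_congr rfl (fun i _ => hcattach i)
        _ = ∑ i ∈ s, w i := by
            rw [Finset.sum_ite_mem, Finset.inter_eq_right.2 (fun i _ => Finset.mem_attach α i)]
        _ = 0 := hw0
    have hcvec : ∑ v ∈ α ∪ α, c v • x v = 0 := by
      rw [Finset.union_self, ← Finset.sum_attach α (fun v => c v • x v)]
      calc ∑ i ∈ α.attach, c ↑i • x ↑i
          = ∑ i ∈ α.attach, (if i ∈ s then w i • x ↑i else 0) := by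
            refine Finset.sum_congr rfl (fun i _ => ?_)
            rw [hcattach i, ite_smul, zero_smul]
        _ = ∑ i ∈ s, w i • x ↑i := by
            rw [Finset.sum_ite_mem, Finset.inter_eq_right.2 (fun i _ => Finset.mem_attach α i)]
        _ = 0 := hw1
    have hzero := key α α hα hα c (fun v hv => hsupp v (ne_of_gt hv))
      (fun v hv => hsupp v (ne_of_lt hv)) hcsum hcvec
    have := hzero ↑e
    rwa [hcattach e, if_pos he] at this
  -- The convex hull intersection property
  · intro α hα β hβ
    apply Set.Subset.antisymm
    · rintro p ⟨hpα, hpβ⟩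
      rw [show x '' ↑α = ↑(α.image x) from (Finset.coe_image).symm,
        Finset.mem_convexHull'] at hpα
      rw [show x '' ↑β = ↑(β.image x) from (Finset.coe_image).symm,
        Finset.mem_convexHull'] at hpβ
      obtain ⟨w1, hw1nn, hw1sum, hw1vec⟩ := hpα
      obtain ⟨w2, hw2nn, hw2sum, hw2vec⟩ := hpβ
      have hinj' : ∀ (s : Finset V), ∀ v ∈ s, ∀ u ∈ s, x v = x u → v = u :=
        fun s v _ u _ h => hinj h
      have hw1sum' : ∑ v ∈ α, w1 (x v) = 1 := by
        rw [← Finset.sum_image (hinj' α)]; exact hw1sum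
      have hw2sum' : ∑ v ∈ β, w2 (x v) = 1 := by
        rw [← Finset.sum_image (hinj' β)]; exact hw2sum
      have hw1vec' : ∑ v ∈ α, w1 (x v) • x v = p := by
        rw [← Finset.sum_image (g := x) (f := fun y : Fin n → ℝ => w1 y • y) (hinj' α)]; exact hw1vec
      have hw2vec' : ∑ v ∈ β, w2 (x v) • x v = p := by
        rw [← Finset.sum_image (g := x) (f := fun y : Fin n → ℝ => w2 y • y) (hinj' β)]; exact hw2vec
      set c : V → ℝ := fun v =>
        (if v ∈ α then w1 (x v) else 0) - (if v ∈ β then w2 (x v) else 0) with hc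
      have hcpos : ∀ v, 0 < c v → v ∈ α := by
        intro v hv
        by_contra h
        rw [hc] at hv
        simp only [h, if_false, zero_sub] at hv
        by_cases hb : v ∈ β
        · rw [if_pos hb] at hv
          exact absurd hv (not_lt.2 (neg_nonpos.2 (hw2nn _ (Finset.mem_image_of_mem x hb))))
        · rw [if_neg hb] at hv
          simp at hv
      have hcneg : ∀ v, c v < 0 → v ∈ β := by
        intro v hv
        by_contra h
        rw [hc] at hv
        simp only [h, if_false, sub_zero] at hv
        by_cases ha : v ∈ α
        · rw [if_pos ha] at hv
          exact absurd hv (not_lt.2 (hw1nn _ (Finset.mem_image_of_mem x ha)))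
        · rw [if_neg ha] at hv
          simp at hv
      have hsum1 : ∑ v ∈ α ∪ β, (if v ∈ α then w1 (x v) else 0) = 1 := by
        rw [Finset.sum_ite_mem, Finset.inter_eq_right.2 Finset.subset_union_left, hw1sum']
      have hsum2 : ∑ v ∈ α ∪ β, (if v ∈ β then w2 (x v) else 0) = 1 := by
        rw [Finset.sum_ite_mem, Finset.inter_eq_right.2 Finset.subset_union_right, hw2sum']
      have hcsum : ∑ v ∈ α ∪ β, c v = 0 := by
        rw [hc]
        rw [Finset.sum_sub_distrib, hsum1, hsum2, sub_self]
      have hvec1 : ∑ v ∈ α ∪ β, (if v ∈ α then w1 (x v) else 0) • x v = p := by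
        calc ∑ v ∈ α ∪ β, (if v ∈ α then w1 (x v) else 0) • x v
            = ∑ v ∈ α ∪ β, (if v ∈ α then w1 (x v) • x v else 0) := by
              refine Finset.sum_congr rfl (fun v _ => ?_); rw [ite_smul, zero_smul]
          _ = ∑ v ∈ α, w1 (x v) • x v := by
              rw [Finset.sum_ite_mem, Finset.inter_eq_right.2 Finset.subset_union_left]
          _ = p := hw1vec'
      have hvec2 : ∑ v ∈ α ∪ β, (if v ∈ β then w2 (x v) else 0) • x v = p := by
        calc ∑ v ∈ α ∪ β, (if v ∈ β then w2 (x v) else 0) • x v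
            = ∑ v ∈ α ∪ β, (if v ∈ β then w2 (x v) • x v else 0) := by
              refine Finset.sum_congr rfl (fun v _ => ?_); rw [ite_smul, zero_smul]
          _ = ∑ v ∈ β, w2 (x v) • x v := by
              rw [Finset.sum_ite_mem, Finset.inter_eq_right.2 Finset.subset_union_right]
          _ = p := hw2vec'
      have hcvec : ∑ v ∈ α ∪ β, c v • x v = 0 := by
        rw [hc]
        simp only [sub_smul]
        rw [Finset.sum_sub_distrib, hvec1, hvec2, sub_self]
      have hzero := key α β hα hβ c hcpos hcneg hcsum hcvec
      -- weights vanish outside `α ∩ β`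
      have hvanish : ∀ v ∈ α, v ∉ α ∩ β → w1 (x v) = 0 := by
        intro v hva hvab
        have hvb : v ∉ β := fun hb => hvab (Finset.mem_inter.2 ⟨hva, hb⟩)
        have := hzero v
        rw [hc] at this
        simp only [if_pos hva, if_neg hvb, sub_zero] at this
        exact this
      have hsumi : ∑ v ∈ α ∩ β, w1 (x v) = 1 := by
        rw [Finset.sum_subset Finset.inter_subset_left hvanish, hw1sum']
      have hveci : ∑ v ∈ α ∩ β, w1 (x v) • x v = p := by
        rw [Finset.sum_subset Finset.inter_subset_left
          (fun v hv hv' => by rw [hvanish v hv hv', zero_smul]), hw1vec']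
      rw [show x '' ↑(α ∩ β) = ↑((α ∩ β).image x) from (Finset.coe_image).symm,
        Finset.mem_convexHull']
      refine ⟨w1, ?_, ?_, ?_⟩
      · rintro y hy
        obtain ⟨v, hv, rfl⟩ := Finset.mem_image.1 hy
        exact hw1nn _ (Finset.mem_image_of_mem x (Finset.mem_of_mem_inter_left hv))
      · rw [Finset.sum_image (hinj' (α ∩ β))]; exact hsumi
      · rw [Finset.sum_image (g := x) (f := fun y : Fin n → ℝ => w1 y • y) (hinj' (α ∩ β))]; exact hveci
    · apply Set.subset_inter
      · exact convexHull_mono (Set.image_mono (by exact_mod_cast Finset.inter_subset_left))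
      · exact convexHull_mono (Set.image_mono (by exact_mod_cast Finset.inter_subset_right))
end

section
/- (Kalai–Meshulam matroidal colorful Helly.) Let K be a d-collapsible finite abstract simplicial complex on a finite vertex set V, and let M be a matroid on ground set V with rank function ρ such that every independent set of M is a face of K. Then there is a face α ∈ K such that ρ(α) = ρ(V) and ρ(V \ α) ≤ d. -/
open scoped Classical

/-- An elementary `d`-collapse: remove all faces containing a nonempty face `σ` of at most
`d` vertices that is contained in exactly one inclusion-maximal face of `K`. -/
def ElemCollapse {V : Type*} (d : ℕ) (K K' : Finset (Finset V)) : Prop :=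
  ∃ σ ∈ K, σ.Nonempty ∧ σ.card ≤ d ∧
    (∃! τ, τ ∈ K ∧ σ ⊆ τ ∧ ∀ η ∈ K, τ ⊆ η → η = τ) ∧
    K' = K.filter fun η => ¬ σ ⊆ η

/-- `K` is `d`-collapsible if some finite sequence of elementary `d`-collapses reduces `K`
to the empty complex. -/
def Collapsible {V : Type*} (d : ℕ) (K : Finset (Finset V)) : Prop :=
  Relation.ReflTransGen (ElemCollapse d) K ∅

/-- The rank function of a matroid `M` on a finite ground set: the maximum cardinality of
an independent subset of `X`. -/
noncomputable def matroidRank {V : Type*} (M : Matroid V) (X : Set V) : ℕ :=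
  sSup {n | ∃ I : Finset V, ↑I ⊆ X ∧ M.Indep ↑I ∧ I.card = n}

section Aux
set_option linter.unusedSectionVars false
variable {V : Type*} [Fintype V] {M : Matroid V}

lemma mrank_le {X : Set V} {n : ℕ}
    (h : ∀ I : Finset V, ↑I ⊆ X → M.Indep ↑I → I.card ≤ n) : matroidRank M X ≤ n :=
  csSup_le ⟨0, ∅, by simp, by simp, by simp⟩
    (by rintro m ⟨I, hIX, hI, rfl⟩; exact h I hIX hI)

lemma le_mrank {X : Set V} (I : Finset V) (hIX : ↑I ⊆ X) (hI : M.Indep ↑I) :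
    I.card ≤ matroidRank M X :=
  le_csSup ⟨Fintype.card V, by rintro m ⟨J, hJX, hJ, rfl⟩; exact J.card_le_univ⟩
    ⟨I, hIX, hI, rfl⟩

lemma mrank_mono {X Y : Set V} (hXY : X ⊆ Y) : matroidRank M X ≤ matroidRank M Y :=
  mrank_le fun I hIX hI => le_mrank I (hIX.trans hXY) hI

lemma indep_card_le_base {I : Finset V} {B : Set V} (hI : M.Indep ↑I) (hB : M.IsBase B) :
    I.card ≤ B.toFinset.card := by
  by_contra h
  push_neg at h
  have hlt : B.encard < (↑I : Set V).encard := by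
    rw [Set.encard_coe_eq_coe_finsetCard, Set.encard_eq_coe_toFinset_card B]
    exact_mod_cast h
  obtain ⟨e, he, hins⟩ := hB.indep.augment hI hlt
  have := hB.eq_of_subset_indep hins (Set.subset_insert _ _)
  exact he.2 (this ▸ Set.mem_insert e B)

lemma mrank_univ_eq {B : Set V} (hB : M.IsBase B) :
    matroidRank M Set.univ = B.toFinset.card := by
  refine le_antisymm (mrank_le fun I _ hI => indep_card_le_base hI hB) ?_
  exact le_mrank B.toFinset (Set.subset_univ _) (by rw [Set.coe_toFinset]; exact hB.indep)

/-- In a finite family, if `σ` has a unique maximal superset `τ`, then every member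
containing `σ` is contained in `τ`. -/
lemma subset_of_unique_max {L : Finset (Finset V)} {σ τ η : Finset V}
    (hτ : τ ∈ L ∧ σ ⊆ τ ∧ ∀ η' ∈ L, τ ⊆ η' → η' = τ)
    (huniq : ∀ y, (y ∈ L ∧ σ ⊆ y ∧ ∀ η' ∈ L, y ⊆ η' → η' = y) → y = τ)
    (hηL : η ∈ L) (hση : σ ⊆ η) : η ⊆ τ := by
  classical
  set S : Finset (Finset V) := L.filter (fun m => η ⊆ m) with hS
  have hηS : η ∈ S := by simp [hS, hηL]
  obtain ⟨m, hmS, hmax⟩ := S.exists_max_image Finset.card ⟨η, hηS⟩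
  simp only [hS, Finset.mem_filter] at hmS
  have hmmax : ∀ η' ∈ L, m ⊆ η' → η' = m := by
    intro η' hη'L hmη'
    have hη'S : η' ∈ S := by
      simp only [hS, Finset.mem_filter]
      exact ⟨hη'L, hmS.2.trans hmη'⟩
    exact (Finset.eq_of_subset_of_card_le hmη' (hmax _ hη'S)).symm
  have : m = τ := huniq m ⟨hmS.1, hση.trans hmS.2, hmmax⟩
  exact this ▸ hmS.2

/-- Key induction along the collapsing sequence. -/
lemma key_collapse (d : ℕ) (K : Finset (Finset V)) (hr : 1 ≤ matroidRank M Set.univ) :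
    ∀ L : Finset (Finset V), Relation.ReflTransGen (ElemCollapse d) L ∅ →
      (∀ B : Set V, M.IsBase B → B.toFinset ∈ L) → L ⊆ K →
      ∃ τ ∈ K, matroidRank M ↑τ = matroidRank M Set.univ ∧
        matroidRank M (Set.univ \ ↑τ) ≤ d := by
  intro L hchain
  induction hchain using Relation.ReflTransGen.head_induction_on with
  | refl =>
    intro hbases _
    obtain ⟨B, hB⟩ := M.exists_isBase
    exact absurd (hbases B hB) (by simp)
  | head hstep _ ih =>
    rename_i L L' _
    intro hbases hLK
    obtain ⟨σ, hσL, hσne, hσd, hu, hL'⟩ := hstep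
    obtain ⟨τ, hτ, huniq⟩ := hu
    by_cases hb : ∃ B : Set V, M.IsBase B ∧ σ ⊆ B.toFinset
    · -- some basis contains σ; τ is the desired face
      obtain ⟨B, hB, hσB⟩ := hb
      have hBτ : B.toFinset ⊆ τ :=
        subset_of_unique_max hτ (fun y hy => huniq y hy) (hbases B hB) hσB
      have hτK : τ ∈ K := hLK hτ.1
      have hσBset : (↑σ : Set V) ⊆ B := by
        intro x hx
        simpa using hσB (by exact_mod_cast hx)
      refine ⟨τ, hτK, ?_, ?_⟩
      · -- τ is spanning
        refine le_antisymm (mrank_mono (Set.subset_univ _)) ?_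
        rw [mrank_univ_eq hB]
        exact le_mrank B.toFinset (by exact_mod_cast hBτ)
          (by rw [Set.coe_toFinset]; exact hB.indep)
      · -- ρ(V \ τ) ≤ |σ| ≤ d
        refine le_trans (mrank_le ?_) hσd
        intro J hJτ hJ
        by_contra h
        push_neg at h
        have hσindep : M.Indep ↑σ := hB.indep.subset hσBset
        have hlt : (↑σ : Set V).encard < (↑J : Set V).encard := by
          rw [Set.encard_coe_eq_coe_finsetCard, Set.encard_coe_eq_coe_finsetCard]
          exact_mod_cast h
        obtain ⟨e, he, hins⟩ := hσindep.augment hJ hlt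
        obtain ⟨B', hB', hsub⟩ := hins.exists_isBase_superset
        have hσB' : σ ⊆ B'.toFinset := by
          intro x hx
          simp only [Set.mem_toFinset]
          exact hsub (Set.mem_insert_of_mem _ (by exact_mod_cast hx))
        have hB'τ : B'.toFinset ⊆ τ :=
          subset_of_unique_max hτ (fun y hy => huniq y hy) (hbases B' hB') hσB'
        have heτ : e ∈ τ := hB'τ (by simp only [Set.mem_toFinset]; exact hsub (Set.mem_insert _ _))
        have : e ∈ (Set.univ \ (↑τ : Set V)) := hJτ he.1
        exact this.2 (by exact_mod_cast heτ)
    · -- no basis contains σ: all bases survive the collapse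
      push_neg at hb
      refine ih ?_ ?_
      · intro B hB
        rw [hL', Finset.mem_filter]
        exact ⟨hbases B hB, hb B hB⟩
      · intro x hx
        rw [hL'] at hx
        exact hLK (Finset.mem_filter.1 hx).1

end Aux

/-- **Kalai–Meshulam matroidal colorful Helly.** Let `K` be a `d`-collapsible finite
simplicial complex on a finite vertex set `V` and let `M` be a matroid on ground set `V`
with rank function `ρ` all of whose independent sets are faces of `K`.  Then there is a
face `α` of `K` (possibly the empty face) with `ρ(α) = ρ(V)` and `ρ(V \ α) ≤ d`. -/
theorem kalai_meshulam_matroidal_colorful_helly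
    {V : Type*} [Fintype V] (d : ℕ)
    (K : Finset (Finset V))
    (hK : ∀ σ ∈ K, σ.Nonempty ∧ ∀ τ ⊆ σ, τ.Nonempty → τ ∈ K)
    (hcol : Collapsible d K)
    (M : Matroid V) (hE : M.E = Set.univ)
    (hMK : ∀ I : Finset V, M.Indep ↑I → I.Nonempty → I ∈ K) :
    ∃ α : Finset V, (α = ∅ ∨ α ∈ K) ∧
      matroidRank M ↑α = matroidRank M Set.univ ∧
      matroidRank M (Set.univ \ ↑α) ≤ d := by
  by_cases h0 : matroidRank M Set.univ = 0
  · refine ⟨∅, Or.inl rfl, ?_, ?_⟩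
    · rw [h0]
      exact le_antisymm (h0 ▸ mrank_mono (Set.subset_univ _)) (Nat.zero_le _)
    · simp only [Finset.coe_empty, Set.diff_empty]
      omega
  · have hr : 1 ≤ matroidRank M Set.univ := Nat.one_le_iff_ne_zero.2 h0
    have hbases : ∀ B : Set V, M.IsBase B → B.toFinset ∈ K := by
      intro B hB
      have hcard : B.toFinset.card = matroidRank M Set.univ := (mrank_univ_eq hB).symm
      refine hMK B.toFinset (by rw [Set.coe_toFinset]; exact hB.indep) ?_
      rw [← Finset.card_pos, hcard]
      omega
    obtain ⟨τ, hτK, h1, h2⟩ := key_collapse d K hr K hcol hbases (subset_refl K)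
    exact ⟨τ, Or.inr hτK, h1, h2⟩
end
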